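/- arXiv:2505.08099 — 3 statements merged into one kernel-verified Lean document; each statement's English description precedes it below -/
import Mathlib

section
/- For every nonnegative integer n, the number of partitions of n in which any two parts differ by at least 2, and by at least 4 if both parts are odd, equals the number of signed partitions of n with k positive parts which are even and distinct and t negative part sizes which are odd, distinct, and each less than 2k, such that the smallest positive part is greater than 2t − δ, where δ = 1 if 1 occurs as a negative part size and δ = 0 otherwise. -/
/-- An (ordinary) partition of `n`: a finite multiset of positive integers summing to `n`. -/
def IsPartitionOf (n : ℕ) (π : Multiset ℕ) : Prop :=
  (∀ x ∈ π, 0 < x) ∧ π.sum = n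

/-- A signed partition of `n`: a pair of finite multisets of positive integers,
the positive parts `π` and the negative part sizes `ν`, with `|π| - |ν| = n`. -/
def IsSignedPartitionOf (n : ℤ) (π ν : Multiset ℕ) : Prop :=
  (∀ x ∈ π, 0 < x) ∧ (∀ x ∈ ν, 0 < x) ∧ (π.sum : ℤ) - (ν.sum : ℤ) = n

/-- Little Göllnitz gap condition: two parts differ by at least 2,
and by at least 4 if both are odd. -/
def LGCond (a b : ℕ) : Prop :=
  2 ≤ |(a : ℤ) - (b : ℤ)| ∧ (Odd a → Odd b → 4 ≤ |(a : ℤ) - (b : ℤ)|)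

def oddb (x : ℕ) : Bool := x % 2 == 1

def Rg (a b : ℕ) : Prop := a + 2 ≤ b ∧ (a % 2 = 1 → b % 2 = 1 → a + 4 ≤ b)

def posL : List ℕ → List ℕ
  | [] => []
  | q :: l => (q + 2 * l.countP oddb + (if oddb q then 1 else 0)) :: posL l

def negL : ℕ → List ℕ → List ℕ
  | _, [] => []
  | j, q :: l => if oddb q then (2*j+1) :: negL (j+1) l else negL (j+1) l

def decL : ℕ → List ℕ → List ℕ → List ℕ
  | _, [], _ => []
  | j, p :: lp, lv =>
      (p - 2 * lv.countP (fun b => decide (2*j+2 < b)) - (if 2*j+1 ∈ lv then 1 else 0))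
        :: decL (j+1) lp lv

instance : IsTrans ℕ Rg :=
  ⟨fun a b c h1 h2 => ⟨by have := h1.1; have := h2.1; omega,
    fun _ _ => by have := h1.1; have := h2.1; omega⟩⟩

lemma oddb_iff {x : ℕ} : oddb x = true ↔ x % 2 = 1 := by simp [oddb]

lemma negL_length (l : List ℕ) : ∀ j, (negL j l).length = l.countP oddb := by
  induction l with
  | nil => simp [negL]
  | cons q l ih =>
    intro j
    by_cases h : oddb q <;> simp [negL, h, List.countP_cons, ih]

lemma negL_sum (l : List ℕ) : ∀ j, (posL l).sum + 2*j*(l.countP oddb) = l.sum + (negL j l).sum := by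
  induction l with
  | nil => simp [negL, posL]
  | cons q l ih =>
    intro j
    have hih := ih (j+1)
    have e1 : 2*(j+1)*(l.countP oddb) = 2*j*(l.countP oddb) + 2*(l.countP oddb) := by ring
    have e2 : 2*j*(l.countP oddb + 1) = 2*j*(l.countP oddb) + 2*j := by ring
    cases h : oddb q <;>
      simp only [negL, posL, h, List.sum_cons, List.countP_cons,
        Bool.false_eq_true, if_true, if_false, add_zero] at * <;> omega

lemma negL_lb (l : List ℕ) : ∀ j b, b ∈ negL j l → 2*j+1 ≤ b := by
  induction l with
  | nil => simp [negL]
  | cons q l ih =>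
    intro j b hb
    by_cases h : oddb q <;> simp only [negL, h, if_true, if_false, List.mem_cons] at hb
    · rcases hb with rfl | hb
      · omega
      · have := ih (j+1) b hb; omega
    · have := ih (j+1) b hb; omega

lemma negL_ub (l : List ℕ) : ∀ j b, b ∈ negL j l → b < 2*(j + l.length) := by
  induction l with
  | nil => simp [negL]
  | cons q l ih =>
    intro j b hb
    by_cases h : oddb q <;> simp only [negL, h, if_true, if_false, List.mem_cons] at hb <;>
      simp only [List.length_cons]
    · rcases hb with rfl | hb
      · omega
      · have := ih (j+1) b hb; omega
    · have := ih (j+1) b hb; omega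

lemma negL_odd (l : List ℕ) : ∀ j b, b ∈ negL j l → b % 2 = 1 := by
  induction l with
  | nil => simp [negL]
  | cons q l ih =>
    intro j b hb
    by_cases h : oddb q <;> simp only [negL, h, if_true, if_false, List.mem_cons] at hb
    · rcases hb with rfl | hb
      · omega
      · exact ih (j+1) b hb
    · exact ih (j+1) b hb

lemma negL_chain (l : List ℕ) : ∀ j, List.Chain' (· < ·) (negL j l) := by
  induction l with
  | nil => simp [negL, List.Chain']
  | cons q l ih =>
    intro j
    by_cases h : oddb q <;> simp only [negL, h, if_true, if_false]
    · refine List.isChain_cons.mpr ⟨?_, ih (j+1)⟩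
      intro y hy
      have := negL_lb l (j+1) y (List.mem_of_mem_head? hy)
      omega
    · exact ih (j+1)

lemma posL_even (l : List ℕ) : ∀ p ∈ posL l, p % 2 = 0 := by
  induction l with
  | nil => simp [posL]
  | cons q l ih =>
    intro p hp
    simp only [posL, List.mem_cons] at hp
    rcases hp with rfl | hp
    · by_cases h : oddb q <;> simp [h] <;> rw [oddb_iff] at * <;> omega
    · exact ih p hp

lemma posL_cons (q : ℕ) (l : List ℕ) :
    posL (q :: l) = (q + 2 * l.countP oddb + (if oddb q then 1 else 0)) :: posL l := rfl

lemma posL_chain (l : List ℕ) (h : List.Chain' Rg l) : List.Chain' (· < ·) (posL l) := by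
  induction l with
  | nil => simp [posL, List.Chain']
  | cons q l ih =>
    rcases l with _ | ⟨q', l⟩
    · simp [posL, List.Chain']
    · simp only [List.Chain', List.isChain_cons_cons] at h
      refine List.isChain_cons_cons.mpr ⟨?_, ih h.2⟩
      obtain ⟨h1, h2⟩ := h.1
      simp only [List.countP_cons]
      cases hq : oddb q <;> cases hq' : oddb q' <;>
        simp only [hq, hq', Bool.false_eq_true, if_true, if_false, add_zero] <;>
        simp only [oddb] at hq hq' <;> simp at hq hq' <;>
        first
          | (have := h2 hq hq'; omega)
          | omega

lemma posL_pos (l : List ℕ) (h : ∀ q ∈ l, 0 < q) : ∀ p ∈ posL l, 0 < p := by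
  induction l with
  | nil => simp [posL]
  | cons q l ih =>
    intro p hp
    simp only [posL, List.mem_cons] at hp
    rcases hp with rfl | hp
    · have := h q (by simp); omega
    · exact ih (fun x hx => h x (by simp [hx])) p hp

lemma one_mem_negL (q : ℕ) (l : List ℕ) : 1 ∈ negL 0 (q :: l) ↔ oddb q = true := by
  constructor
  · intro h1
    by_cases h : oddb q
    · exact h
    · simp only [negL, h, if_false] at h1
      have := negL_lb l 1 1 h1; omega
  · intro h
    simp [negL, h]

lemma posL_min (l : List ℕ) (h : List.Chain' Rg l) (hpos : ∀ q ∈ l, 0 < q) :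
    ∀ p ∈ posL l, 2 * l.countP oddb < p + (if 1 ∈ negL 0 l then 1 else 0) := by
  rcases l with _ | ⟨q, l⟩
  · simp [posL]
  intro p hp
  have hhead : ∀ x ∈ posL (q :: l), q + 2 * l.countP oddb + (if oddb q then 1 else 0) ≤ x := by
    intro x hx
    have hc := posL_chain _ h
    rw [posL_cons] at hc hx
    unfold List.Chain' at hc
    rw [List.isChain_iff_pairwise] at hc
    rcases List.mem_cons.mp hx with rfl | hx
    · exact le_refl _
    · exact le_of_lt ((List.pairwise_cons.mp hc).1 x hx)
  have hq := hpos q (by simp)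
  have hle := hhead p hp
  have hd : (if 1 ∈ negL 0 (q :: l) then (1:ℕ) else 0) = (if oddb q = true then 1 else 0) := by
    by_cases hq1 : oddb q = true <;> simp [one_mem_negL, hq1]
  rw [hd]
  simp only [List.countP_cons]
  cases hodd : oddb q <;>
    simp only [hodd, Bool.false_eq_true, if_true, if_false, add_zero] at hle ⊢ <;> omega

lemma RT1 (l : List ℕ) : ∀ j lv, (∀ b ∈ lv, b < 2*j+1) →
    decL j (posL l) (lv ++ negL j l) = l := by
  induction l with
  | nil => simp [posL, negL, decL]
  | cons q l ih =>
    intro j lv hlv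
    rw [posL_cons]
    show (_ - _ - _) :: decL (j+1) (posL l) (lv ++ negL j (q::l)) = q :: l
    have hsplit : negL j (q :: l) = (if oddb q then [2*j+1] else []) ++ negL (j+1) l := by
      by_cases h : oddb q <;> simp [negL, h]
    have hcount : (lv ++ negL j (q::l)).countP (fun b => decide (2*j+2 < b))
        = l.countP oddb := by
      rw [hsplit, List.countP_append, List.countP_append]
      have h1 : lv.countP (fun b => decide (2*j+2 < b)) = 0 := by
        rw [List.countP_eq_zero]
        intro b hb
        have := hlv b hb
        simp; omega
      have h2 : (if oddb q then [2*j+1] else []).countP (fun b => decide (2*j+2 < b)) = 0 := by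
        by_cases h : oddb q <;> simp [h]
      have h3 : (negL (j+1) l).countP (fun b => decide (2*j+2 < b)) = (negL (j+1) l).length := by
        rw [List.countP_eq_length]
        intro b hb
        have := negL_lb l (j+1) b hb
        simp; omega
      rw [h1, h2, h3, negL_length]
      omega
    have hmem : (2*j+1 ∈ lv ++ negL j (q::l)) ↔ oddb q = true := by
      rw [hsplit]
      simp only [List.mem_append]
      constructor
      · rintro (h | h | h)
        · have := hlv _ h; omega
        · by_cases hq : oddb q
          · exact hq
          · simp [hq] at h
        · exact absurd (negL_lb l (j+1) _ h) (by omega)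
      · intro h; right; left; simp [h]
    rw [hcount]
    have hif : (if 2*j+1 ∈ lv ++ negL j (q::l) then (1:ℕ) else 0)
        = (if oddb q = true then 1 else 0) := by
      by_cases h : oddb q = true <;> simp [hmem, h]
    rw [hif]
    congr 1
    · cases h : oddb q <;>
        simp only [h, Bool.false_eq_true, if_true, if_false, add_zero] <;> omega
    · rw [hsplit, ← List.append_assoc]
      apply ih (j+1)
      intro b hb
      rcases List.mem_append.mp hb with hb | hb
      · have := hlv b hb; omega
      · by_cases h : oddb q <;> simp [h] at hb <;> omega

lemma count_shift (lv : List ℕ) (hnd : lv.Nodup) (hodd : ∀ b ∈ lv, b % 2 = 1) (j : ℕ) :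
    lv.countP (fun b => decide (2*j+2 < b)) =
      lv.countP (fun b => decide (2*(j+1)+2 < b)) + (if 2*(j+1)+1 ∈ lv then 1 else 0) := by
  induction lv with
  | nil => simp
  | cons b lv ih =>
    have hb := hodd b (by simp)
    have hnd' := List.nodup_cons.mp hnd
    have ih' := ih hnd'.2 (fun x hx => hodd x (by simp [hx]))
    simp only [List.countP_cons, decide_eq_true_eq, List.mem_cons]
    by_cases hbe : b = 2*(j+1)+1
    · have hnm : ¬ (2*(j+1)+1 ∈ lv) := hbe ▸ hnd'.1
      rw [if_neg hnm] at ih'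
      rw [if_pos (Or.inl hbe.symm), if_pos (by omega : 2*j+2 < b),
        if_neg (by omega : ¬ 2*(j+1)+2 < b)]
      omega
    · have harith : (if 2*j+2 < b then (1:ℕ) else 0) = (if 2*(j+1)+2 < b then 1 else 0) := by
        by_cases hlt : 2*j+2 < b
        · rw [if_pos hlt, if_pos (by omega : 2*(j+1)+2 < b)]
        · rw [if_neg hlt, if_neg (by omega : ¬ 2*(j+1)+2 < b)]
      rw [harith]
      have hne : (2*(j+1)+1 = b ∨ 2*(j+1)+1 ∈ lv) ↔ 2*(j+1)+1 ∈ lv := by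
        constructor
        · rintro (h | h)
          · omega
          · exact h
        · exact Or.inr
      simp only [hne]
      by_cases hm : 2*(j+1)+1 ∈ lv
      · rw [if_pos hm]; rw [if_pos hm] at ih'; omega
      · rw [if_neg hm]; rw [if_neg hm] at ih'; omega

lemma efun (j : ℕ) : (fun b : ℕ => decide (2*(j+1) < b)) = (fun b => decide (2*j+2 < b)) := by
  funext b
  rw [show (2*(j+1) : ℕ) = 2*j+2 from by ring]

lemma filter_shift (lv : List ℕ) (hch : lv.Chain' (· < ·)) (hodd : ∀ b ∈ lv, b % 2 = 1) (j : ℕ) :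
    lv.filter (fun b => decide (2*j < b)) =
      (if 2*j+1 ∈ lv then (2*j+1) :: lv.filter (fun b => decide (2*(j+1) < b))
        else lv.filter (fun b => decide (2*(j+1) < b))) := by
  rw [efun]
  induction lv with
  | nil => simp
  | cons b lv ih =>
    have hb := hodd b (by simp)
    have hp : List.Pairwise (· < ·) (b :: lv) := List.isChain_iff_pairwise.mp hch
    have hgt : ∀ x ∈ lv, b < x := fun x hx => (List.pairwise_cons.mp hp).1 x hx
    have ih' := ih ((List.isChain_cons.mp hch).2) (fun x hx => hodd x (by simp [hx]))
    simp only [List.filter_cons, decide_eq_true_eq]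
    by_cases hbe : b = 2*j + 1
    · subst hbe
      have hnm : (2*j+1 : ℕ) ∉ lv := fun h => absurd (hgt _ h) (by omega)
      rw [if_neg hnm] at ih'
      rw [if_pos List.mem_cons_self, if_pos (by omega : 2*j < 2*j+1),
        if_neg (by omega : ¬ 2*j+2 < 2*j+1)]
      rw [ih']
    · have hmem2 : (2*j+1 ∈ b :: lv) ↔ (2*j+1 ∈ lv) := by
        simp only [List.mem_cons]
        constructor
        · rintro (h | h)
          · omega
          · exact h
        · exact Or.inr
      simp only [hmem2]
      rcases Nat.lt_or_ge (2*j) b with h | h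
      · have hnm : (2*j+1 : ℕ) ∉ lv := fun hm => absurd (hgt _ hm) (by omega)
        rw [if_neg hnm]
        rw [if_neg hnm] at ih'
        rw [if_pos h, if_pos (by omega : 2*j+2 < b), ih']
      · rw [if_neg (by omega : ¬ 2*j < b), if_neg (by omega : ¬ 2*j+2 < b), ih']

lemma decL_cons (j p : ℕ) (lp lv : List ℕ) :
    decL j (p :: lp) lv =
      (p - 2 * lv.countP (fun b => decide (2*j+2 < b)) - (if 2*j+1 ∈ lv then 1 else 0))
        :: decL (j+1) lp lv := rfl

lemma RT2 (lv : List ℕ) (hchv : lv.Chain' (· < ·)) (hodd : ∀ b ∈ lv, b % 2 = 1) :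
    ∀ lp j, (∀ p ∈ lp, p % 2 = 0) → lp.Chain' (· < ·) →
      (∀ b ∈ lv, b < 2*(j + lp.length)) →
      (∀ p ∈ lp, 2 * lv.countP (fun b => decide (2*j+2 < b)) + (if 2*j+1 ∈ lv then 1 else 0) < p) →
      posL (decL j lp lv) = lp ∧
      negL j (decL j lp lv) = lv.filter (fun b => decide (2*j < b)) ∧
      List.Chain' Rg (decL j lp lv) ∧ (∀ q ∈ decL j lp lv, 0 < q) := by
  have hnd : lv.Nodup := (List.isChain_iff_pairwise.mp hchv).nodup
  intro lp
  induction lp with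
  | nil =>
    intro j _ _ hub _
    refine ⟨rfl, ?_, by simp [decL, List.Chain'], by simp [decL]⟩
    rw [List.filter_eq_nil_iff.mpr]
    · simp [decL, negL]
    · intro b hb
      have := hub b hb
      simp at this ⊢
      omega
  | cons p lp ih =>
    intro j hev hch hub hinv
    have hp := hinv p (by simp)
    have hpe := hev p (by simp)
    have hq : p - 2 * lv.countP (fun b => decide (2*j+2 < b)) - (if 2*j+1 ∈ lv then 1 else 0)
        + (2 * lv.countP (fun b => decide (2*j+2 < b)) + (if 2*j+1 ∈ lv then 1 else 0)) = p := by
      omega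
    have hub' : ∀ b ∈ lv, b < 2*((j+1) + lp.length) := by
      intro b hb
      have := hub b hb
      simp only [List.length_cons] at this
      omega
    have hcs := count_shift lv hnd hodd j
    have hinv' : ∀ p' ∈ lp, 2 * lv.countP (fun b => decide (2*(j+1)+2 < b)) +
        (if 2*(j+1)+1 ∈ lv then 1 else 0) < p' := by
      intro p' hp'
      have h1 := hinv p' (by simp [hp'])
      omega
    have ihr := ih (j+1) (fun x hx => hev x (by simp [hx])) (List.isChain_cons.mp hch).2 hub' hinv'
    obtain ⟨ihpos, ihneg, ihchain, ihposq⟩ := ihr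
    have hcount_tail : (decL (j+1) lp lv).countP oddb
        = lv.countP (fun b => decide (2*j+2 < b)) := by
      have hlen := congrArg List.length ihneg
      rw [negL_length] at hlen
      rw [hlen, efun, ← List.countP_eq_length_filter]
    have hqpar : ∀ h : 2*j+1 ∈ lv,
        oddb (p - 2 * lv.countP (fun b => decide (2*j+2 < b)) - (if 2*j+1 ∈ lv then 1 else 0))
          = true := by
      intro h
      rw [oddb_iff]
      rw [if_pos h] at hq ⊢
      omega
    have hqpar' : ∀ _ : 2*j+1 ∉ lv,
        oddb (p - 2 * lv.countP (fun b => decide (2*j+2 < b)) - (if 2*j+1 ∈ lv then 1 else 0))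
          = false := by
      intro h
      have : (p - 2 * lv.countP (fun b => decide (2*j+2 < b))
          - (if 2*j+1 ∈ lv then 1 else 0)) % 2 = 0 := by
        rw [if_neg h] at hq ⊢
        omega
      simp [oddb, this]
    refine ⟨?_, ?_, ?_, ?_⟩
    · rw [decL_cons, posL_cons, ihpos, hcount_tail]
      congr 1
      by_cases h : 2*j+1 ∈ lv
      · rw [if_pos (hqpar h), if_pos h] at *
        omega
      · rw [hqpar' h] at *
        simp only [Bool.false_eq_true, if_false, if_neg h] at *
        omega
    · rw [decL_cons]
      show negL j (_ :: _) = _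
      have hsplit : ∀ (x : ℕ) (r : List ℕ), negL j (x :: r)
          = (if oddb x then [2*j+1] else []) ++ negL (j+1) r := by
        intro x r
        by_cases h : oddb x <;> simp [negL, h]
      rw [hsplit, ihneg, filter_shift lv hchv hodd j]
      by_cases h : 2*j+1 ∈ lv
      · rw [hqpar h]
        simp [h]
      · rw [hqpar' h]
        simp [h]
    · rw [decL_cons]
      rcases lp with _ | ⟨p', lp⟩
      · simp [decL, List.Chain']
      · rw [decL_cons]
        refine List.isChain_cons_cons.mpr ⟨?_, by rw [← decL_cons]; exact ihchain⟩
        have hp' := hinv' p' (by simp)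
        have hpe' := hev p' (by simp)
        have hgap : p < p' := (List.isChain_cons_cons.mp hch).1
        have hq' : p' - 2 * lv.countP (fun b => decide (2*(j+1)+2 < b))
            - (if 2*(j+1)+1 ∈ lv then 1 else 0)
            + (2 * lv.countP (fun b => decide (2*(j+1)+2 < b))
              + (if 2*(j+1)+1 ∈ lv then 1 else 0)) = p' := by
          omega
        constructor
        · omega
        · intro ho1 ho2
          omega
    · rw [decL_cons]
      intro q hq'
      rcases List.mem_cons.mp hq' with rfl | hq'
      · omega
      · exact ihposq q hq'

lemma posL_length (l : List ℕ) : (posL l).length = l.length := by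
  induction l with
  | nil => rfl
  | cons q l ih => simp [posL_cons, ih]

lemma count_one (lv : List ℕ) (hnd : lv.Nodup) (hodd : ∀ b ∈ lv, b % 2 = 1) :
    lv.countP (fun b => decide (2 < b)) + (if 1 ∈ lv then 1 else 0) = lv.length := by
  induction lv with
  | nil => simp
  | cons b lv ih =>
    have hb := hodd b (by simp)
    have hnd' := List.nodup_cons.mp hnd
    have ih' := ih hnd'.2 (fun x hx => hodd x (by simp [hx]))
    simp only [List.countP_cons, decide_eq_true_eq, List.mem_cons, List.length_cons]
    by_cases hbe : b = 1
    · have hnm : ¬ (1 ∈ lv) := hbe ▸ hnd'.1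
      rw [if_neg hnm] at ih'
      rw [if_pos (Or.inl hbe.symm), if_neg (by omega : ¬ 2 < b)]
      omega
    · rw [if_pos (by omega : 2 < b)]
      have hne : (1 = b ∨ 1 ∈ lv) ↔ 1 ∈ lv := by
        constructor
        · rintro (h | h)
          · omega
          · exact h
        · exact Or.inr
      simp only [hne]
      by_cases hm : 1 ∈ lv
      · rw [if_pos hm]; rw [if_pos hm] at ih'; omega
      · rw [if_neg hm]; rw [if_neg hm] at ih'; omega

lemma Rg_LG {a b : ℕ} (h : Rg a b) : LGCond a b := by
  obtain ⟨h1, h2⟩ := h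
  have habs : |(a:ℤ) - (b:ℤ)| = (b:ℤ) - a := by
    rw [abs_of_nonpos (by push_cast; omega), neg_sub]
  constructor
  · rw [habs]; push_cast; omega
  · intro ha hb
    rw [Nat.odd_iff] at ha hb
    rw [habs]
    have := h2 ha hb
    push_cast; omega

lemma LG_symm : ∀ {a b : ℕ}, LGCond a b → LGCond b a := by
  intro a b h
  exact ⟨by rw [abs_sub_comm]; exact h.1, fun hb ha => by rw [abs_sub_comm]; exact h.2 ha hb⟩

lemma LG_le_Rg {a b : ℕ} (hle : a ≤ b) (h : LGCond a b) : Rg a b := by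
  obtain ⟨h1, h2⟩ := h
  have habs : |(a:ℤ) - (b:ℤ)| = (b:ℤ) - a := by
    rw [abs_of_nonpos (by push_cast; omega), neg_sub]
  rw [habs] at h1
  constructor
  · omega
  · intro ha hb
    have := h2 (Nat.odd_iff.mpr ha) (Nat.odd_iff.mpr hb)
    rw [habs] at this
    omega

lemma sorted_lt_of_chainRg {l : List ℕ} (hch : l.Chain' Rg) : l.Pairwise (· < ·) :=
  (List.isChain_iff_pairwise.mp hch).imp (fun h => by have := h.1; omega)

def LAset (n : ℕ) : Set (List ℕ) := {l | l.Chain' Rg ∧ (∀ q ∈ l, 0 < q) ∧ l.sum = n}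

def LBset (n : ℕ) : Set (List ℕ × List ℕ) :=
  {σ | σ.1.Chain' (· < ·) ∧ σ.2.Chain' (· < ·) ∧ (∀ p ∈ σ.1, p % 2 = 0) ∧
    (∀ p ∈ σ.1, 0 < p) ∧ (∀ b ∈ σ.2, b % 2 = 1) ∧ (∀ b ∈ σ.2, b < 2 * σ.1.length) ∧
    (∀ p ∈ σ.1, 2 * σ.2.length < p + (if 1 ∈ σ.2 then 1 else 0)) ∧
    σ.1.sum = n + σ.2.sum}

lemma step1 (n : ℕ) :
    {π : Multiset ℕ | IsPartitionOf n π ∧ Multiset.Pairwise LGCond π} =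
      (fun l : List ℕ => (↑l : Multiset ℕ)) '' LAset n := by
  ext π
  simp only [Set.mem_setOf_eq, Set.mem_image]
  constructor
  · rintro ⟨⟨hpos, hsum⟩, hpw⟩
    refine ⟨Multiset.sort π (· ≤ ·), ⟨?_, ?_, ?_⟩, Multiset.sort_eq _ _⟩
    · obtain ⟨l₀, hl₀, hpw₀⟩ := hpw
      have hperm : List.Perm l₀ (Multiset.sort π (· ≤ ·)) := by
        rw [← Multiset.coe_eq_coe, Multiset.sort_eq, hl₀]
      have hpws : (Multiset.sort π (· ≤ ·)).Pairwise LGCond :=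
        hpw₀.perm hperm (fun h => LG_symm h)
      have hsorted := Multiset.pairwise_sort π (· ≤ ·)
      unfold List.Chain'
      rw [List.isChain_iff_pairwise]
      exact (hsorted.and hpws).imp (fun h => LG_le_Rg h.1 h.2)
    · intro q hq
      exact hpos q ((Multiset.mem_sort _).mp hq)
    · have h := congrArg Multiset.sum (Multiset.sort_eq π (· ≤ ·))
      rw [Multiset.sum_coe] at h
      rw [h, hsum]
  · rintro ⟨l, ⟨hch, hpos, hsum⟩, rfl⟩
    refine ⟨⟨fun x hx => hpos x (Multiset.mem_coe.mp hx), by rw [Multiset.sum_coe, hsum]⟩,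
      ⟨l, rfl, (List.isChain_iff_pairwise.mp hch).imp (fun h => Rg_LG h)⟩⟩

lemma step1inj (n : ℕ) : Set.InjOn (fun l : List ℕ => (↑l : Multiset ℕ)) (LAset n) := by
  intro l hl l' hl' he
  have hp : List.Perm l l' := Multiset.coe_eq_coe.mp he
  exact hp.eq_of_pairwise (fun a b _ _ h1 h2 => absurd (h1.trans h2) (lt_irrefl a)) (sorted_lt_of_chainRg hl.1) (sorted_lt_of_chainRg hl'.1)

lemma nodup_sorted_chain {l : List ℕ} (hs : l.Pairwise (· ≤ ·)) (hnd : l.Nodup) :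
    l.Chain' (· < ·) := by
  unfold List.Chain'
  rw [List.isChain_iff_pairwise]
  exact (hs.and hnd).imp (fun h => lt_of_le_of_ne h.1 h.2)

lemma step3 (n : ℕ) :
    {σ : Multiset ℕ × Multiset ℕ | IsSignedPartitionOf n σ.1 σ.2 ∧
      (∀ x ∈ σ.1, Even x) ∧ σ.1.Nodup ∧
      (∀ x ∈ σ.2, Odd x) ∧ σ.2.Nodup ∧
      (∀ x ∈ σ.2, x < 2 * Multiset.card σ.1) ∧
      (∀ x ∈ σ.1, 2 * (Multiset.card σ.2 : ℤ) - (if 1 ∈ σ.2 then 1 else 0)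
        < (x : ℤ))} =
      (fun σ : List ℕ × List ℕ => ((↑σ.1 : Multiset ℕ), (↑σ.2 : Multiset ℕ))) '' LBset n := by
  ext ⟨π, ν⟩
  simp only [Set.mem_setOf_eq, Set.mem_image]
  constructor
  · rintro ⟨⟨hpos1, hpos2, hsum⟩, hev, hnd1, hodd, hnd2, hub, hmin⟩
    refine ⟨(Multiset.sort π (· ≤ ·), Multiset.sort ν (· ≤ ·)), ?_, by simp [Multiset.sort_eq]⟩
    simp only [LBset, Set.mem_setOf_eq]
    refine ⟨?_, ?_, ?_, ?_, ?_, ?_, ?_, ?_⟩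
    · exact nodup_sorted_chain (Multiset.pairwise_sort _ _)
        ((Multiset.coe_nodup).mp (by rw [Multiset.sort_eq]; exact hnd1))
    · exact nodup_sorted_chain (Multiset.pairwise_sort _ _)
        ((Multiset.coe_nodup).mp (by rw [Multiset.sort_eq]; exact hnd2))
    · intro p hp
      exact Nat.even_iff.mp (hev p ((Multiset.mem_sort _).mp hp))
    · intro p hp
      exact hpos1 p ((Multiset.mem_sort _).mp hp)
    · intro b hb
      exact Nat.odd_iff.mp (hodd b ((Multiset.mem_sort _).mp hb))
    · intro b hb
      have h1 := hub b ((Multiset.mem_sort _).mp hb)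
      have h2 : (Multiset.sort π (· ≤ ·)).length = Multiset.card π := by
        rw [← Multiset.coe_card, Multiset.sort_eq]
      omega
    · intro p hp
      have h1 := hmin p ((Multiset.mem_sort _).mp hp)
      have h2 : (Multiset.sort ν (· ≤ ·)).length = Multiset.card ν := by
        rw [← Multiset.coe_card, Multiset.sort_eq]
      have h3 : (1 ∈ Multiset.sort ν (· ≤ ·)) ↔ 1 ∈ ν := Multiset.mem_sort _
      by_cases hm : 1 ∈ ν
      · rw [if_pos hm] at h1
        rw [if_pos (h3.mpr hm)]
        omega
      · rw [if_neg hm] at h1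
        rw [if_neg (fun hx => hm (h3.mp hx))]
        omega
    · have e1 : (Multiset.sort π (· ≤ ·)).sum = π.sum := by
        rw [← Multiset.sum_coe, Multiset.sort_eq]
      have e2 : (Multiset.sort ν (· ≤ ·)).sum = ν.sum := by
        rw [← Multiset.sum_coe, Multiset.sort_eq]
      omega
  · rintro ⟨⟨lp, lv⟩, hmem, he⟩
    simp only [LBset, Set.mem_setOf_eq] at hmem
    obtain ⟨hch1, hch2, hev, hpos, hodd, hub, hmin, hsum⟩ := hmem
    rw [Prod.ext_iff] at he
    obtain ⟨he1, he2⟩ := he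
    simp only at he1 he2
    subst he1
    subst he2
    have hnd1 : (↑lp : Multiset ℕ).Nodup :=
      Multiset.coe_nodup.mpr (List.isChain_iff_pairwise.mp hch1).nodup
    have hnd2 : (↑lv : Multiset ℕ).Nodup :=
      Multiset.coe_nodup.mpr (List.isChain_iff_pairwise.mp hch2).nodup
    refine ⟨⟨fun x hx => hpos x (Multiset.mem_coe.mp hx),
      fun x hx => by have := hodd x (Multiset.mem_coe.mp hx); omega, ?_⟩,
      fun x hx => Nat.even_iff.mpr (hev x (Multiset.mem_coe.mp hx)), hnd1,
      fun x hx => Nat.odd_iff.mpr (hodd x (Multiset.mem_coe.mp hx)), hnd2, ?_, ?_⟩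
    · rw [Multiset.sum_coe, Multiset.sum_coe]
      omega
    · intro x hx
      have := hub x (Multiset.mem_coe.mp hx)
      rw [Multiset.coe_card]
      omega
    · intro x hx
      have h1 := hmin x (Multiset.mem_coe.mp hx)
      rw [Multiset.coe_card]
      by_cases hm : 1 ∈ lv
      · rw [if_pos hm] at h1
        rw [if_pos (Multiset.mem_coe.mpr hm)]
        push_cast
        omega
      · rw [if_neg hm] at h1
        rw [if_neg (fun hx2 => hm (Multiset.mem_coe.mp hx2))]
        push_cast
        omega

lemma step3inj (n : ℕ) :
    Set.InjOn (fun σ : List ℕ × List ℕ => ((↑σ.1 : Multiset ℕ), (↑σ.2 : Multiset ℕ)))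
      (LBset n) := by
  rintro ⟨lp, lv⟩ hl ⟨lp', lv'⟩ hl' he
  simp only [Prod.ext_iff] at he ⊢
  obtain ⟨he1, he2⟩ := he
  have s1 : lp.Pairwise (· < ·) := List.isChain_iff_pairwise.mp hl.1
  have s2 : lv.Pairwise (· < ·) := List.isChain_iff_pairwise.mp hl.2.1
  have s1' : lp'.Pairwise (· < ·) := List.isChain_iff_pairwise.mp hl'.1
  have s2' : lv'.Pairwise (· < ·) := List.isChain_iff_pairwise.mp hl'.2.1
  exact ⟨(Multiset.coe_eq_coe.mp he1).eq_of_pairwise (fun a b _ _ h1 h2 => absurd (h1.trans h2) (lt_irrefl a)) s1 s1',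
    (Multiset.coe_eq_coe.mp he2).eq_of_pairwise (fun a b _ _ h1 h2 => absurd (h1.trans h2) (lt_irrefl a)) s2 s2'⟩

lemma step2 (n : ℕ) : LBset n = (fun l : List ℕ => (posL l, negL 0 l)) '' LAset n := by
  ext ⟨lp, lv⟩
  simp only [LBset, Set.mem_setOf_eq, Set.mem_image, Prod.ext_iff]
  constructor
  · rintro ⟨hch1, hch2, hev, hpos, hodd, hub, hmin, hsum⟩
    have hndv : lv.Nodup := (List.isChain_iff_pairwise.mp hch2).nodup
    have hef : (fun b : ℕ => decide (2*0+2 < b)) = (fun b : ℕ => decide (2 < b)) := by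
      norm_num
    have hinv0 : ∀ p ∈ lp,
        2 * lv.countP (fun b => decide (2*0+2 < b)) + (if 2*0+1 ∈ lv then 1 else 0) < p := by
      intro p hp
      have h1 := hmin p hp
      have h2 := count_one lv hndv hodd
      rw [hef]
      have h3 : (2*0+1 : ℕ) = 1 := by norm_num
      rw [h3]
      by_cases hm : 1 ∈ lv
      · rw [if_pos hm] at h1 h2 ⊢; omega
      · rw [if_neg hm] at h1 h2 ⊢; omega
    have hub0 : ∀ b ∈ lv, b < 2*(0 + lp.length) := by
      intro b hb
      have := hub b hb
      omega
    obtain ⟨hpos', hneg', hchain', hquant⟩ := RT2 lv hch2 hodd lp 0 hev hch1 hub0 hinv0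
    have hneg2 : negL 0 (decL 0 lp lv) = lv := by
      rw [hneg']
      apply List.filter_eq_self.mpr
      intro b hb
      have := hodd b hb
      simp
      omega
    refine ⟨decL 0 lp lv, ⟨hchain', hquant, ?_⟩, hpos', hneg2⟩
    have hs := negL_sum (decL 0 lp lv) 0
    rw [hpos', hneg2] at hs
    omega
  · rintro ⟨l, ⟨hch, hposl, hsuml⟩, he1, he2⟩
    subst he1
    subst he2
    refine ⟨posL_chain l hch, negL_chain l 0, posL_even l, posL_pos l hposl,
      negL_odd l 0, ?_, ?_, ?_⟩
    · intro b hb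
      have h1 := negL_ub l 0 b hb
      rw [posL_length]
      omega
    · intro p hp
      have h1 := posL_min l hch hposl p hp
      rw [negL_length]
      exact h1
    · have hs := negL_sum l 0
      omega

lemma step2inj (n : ℕ) :
    Set.InjOn (fun l : List ℕ => (posL l, negL 0 l)) (LAset n) := by
  have hG : ∀ l : List ℕ, decL 0 (posL l) (negL 0 l) = l := by
    intro l
    have h := RT1 l 0 [] (by simp)
    simpa using h
  intro l _ l' _ he
  simp only [Prod.ext_iff] at he
  rw [← hG l, ← hG l', he.1, he.2]

/-- Theorem 10: LG₁(n) = E(n). -/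
theorem little_gollnitz_first_signed_E (n : ℕ) :
    {π : Multiset ℕ | IsPartitionOf n π ∧ Multiset.Pairwise LGCond π}.ncard =
    {σ : Multiset ℕ × Multiset ℕ | IsSignedPartitionOf n σ.1 σ.2 ∧
      (∀ x ∈ σ.1, Even x) ∧ σ.1.Nodup ∧
      (∀ x ∈ σ.2, Odd x) ∧ σ.2.Nodup ∧
      (∀ x ∈ σ.2, x < 2 * Multiset.card σ.1) ∧
      (∀ x ∈ σ.1, 2 * (Multiset.card σ.2 : ℤ) - (if 1 ∈ σ.2 then 1 else 0)
        < (x : ℤ))}.ncard := by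
  rw [step1 n, step3 n, step2 n,
    Set.ncard_image_of_injOn (step1inj n),
    Set.ncard_image_of_injOn ((step2 n ▸ step3inj n)),
    Set.ncard_image_of_injOn (step2inj n)]
end

section
/- For every nonnegative integer n, the number of partitions of n without parts equal to 1 in which any two parts differ by at least 2, and by at least 4 if both parts are odd, equals the number of signed partitions of n with k positive parts which are even and distinct and t negative part sizes which are odd, distinct, and each less than 2k, such that the smallest positive part is greater than 2t + δ, where δ = 1 if 1 occurs as a negative part size and δ = 0 otherwise. -/
namespace LG2



def ocount (l : List ℕ) : ℕ := l.countP (fun x => x % 2 = 1)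

@[simp] lemma ocount_nil : ocount [] = 0 := rfl

lemma ocount_cons (a : ℕ) (l : List ℕ) :
    ocount (a :: l) = (if a % 2 = 1 then 1 else 0) + ocount l := by
  by_cases h : a % 2 = 1 <;> simp [ocount, List.countP_cons, h] <;> omega

def phiAux : ℕ → List ℕ → List ℕ × List ℕ
  | _, [] => ([], [])
  | j, a :: l =>
    let r := phiAux (j+1) l
    if a % 2 = 1 then ((a + 2 * ocount l + 1) :: r.1, (2*j+1) :: r.2)
    else ((a + 2 * ocount l) :: r.1, r.2)

lemma phiAux_cons (j a : ℕ) (l : List ℕ) :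
    phiAux j (a :: l) =
      if a % 2 = 1 then
        ((a + 2 * ocount l + 1) :: (phiAux (j+1) l).1, (2*j+1) :: (phiAux (j+1) l).2)
      else ((a + 2 * ocount l) :: (phiAux (j+1) l).1, (phiAux (j+1) l).2) := by
  by_cases h : a % 2 = 1 <;> simp [phiAux, h]

lemma phiAux_fst_length (j : ℕ) (l : List ℕ) : (phiAux j l).1.length = l.length := by
  induction l generalizing j with
  | nil => rfl
  | cons a l ih => rw [phiAux_cons]; split <;> simp [ih]

lemma phiAux_snd_length (j : ℕ) (l : List ℕ) : (phiAux j l).2.length = ocount l := by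
  induction l generalizing j with
  | nil => rfl
  | cons a l ih =>
    rw [phiAux_cons, ocount_cons]
    split <;> simp [ih] <;> omega

lemma phiAux_sum (j : ℕ) (l : List ℕ) :
    (phiAux j l).1.sum + 2 * j * ocount l = l.sum + (phiAux j l).2.sum := by
  induction l generalizing j with
  | nil => simp [phiAux]
  | cons a l ih =>
    rw [phiAux_cons, ocount_cons]
    have h1 := ih (j+1)
    have h2 : 2 * (j+1) * ocount l = 2 * j * ocount l + 2 * ocount l := by ring
    have h3 : ∀ c : ℕ, 2 * j * (c + ocount l) = 2 * j * c + 2 * j * ocount l := by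
      intro c; ring
    split <;> simp only [List.sum_cons] <;> rw [h3] <;> omega

def gapA (a b : ℕ) : Prop := a + 2 ≤ b ∧ (a % 2 = 1 → b % 2 = 1 → a + 4 ≤ b)

lemma phiAux_fst_even (j : ℕ) (l : List ℕ) : ∀ x ∈ (phiAux j l).1, x % 2 = 0 := by
  induction l generalizing j with
  | nil => simp [phiAux]
  | cons a l ih =>
    rw [phiAux_cons]
    by_cases h : a % 2 = 1 <;> simp [h] <;>
      exact ⟨by omega, fun x hx => ih (j+1) x hx⟩

lemma phiAux_fst_chain (j : ℕ) (l : List ℕ) (hc : l.IsChain gapA) :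
    (phiAux j l).1.IsChain (fun x y => x + 2 ≤ y) := by
  induction l generalizing j with
  | nil => simp [phiAux]
  | cons a l ih =>
    cases l with
    | nil =>
      rw [phiAux_cons]
      by_cases h : a % 2 = 1 <;> simp [h, phiAux]
    | cons b l' =>
      rw [List.isChain_cons_cons] at hc
      obtain ⟨⟨h1, h2⟩, htl⟩ := hc
      have ihh := ih (j+1) htl
      rw [phiAux_cons j a, phiAux_cons (j+1) b]
      rw [phiAux_cons (j+1) b] at ihh
      by_cases ha : a % 2 = 1 <;> by_cases hb : b % 2 = 1 <;>
        simp only [ha, hb, if_true, if_false, ocount_cons] at ihh ⊢ <;>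
        refine List.isChain_cons_cons.mpr ⟨?_, ihh⟩
      · have := h2 ha hb; omega
      · omega
      · omega
      · omega

lemma phiAux_snd_facts (j : ℕ) (l : List ℕ) :
    ∀ x ∈ (phiAux j l).2, x % 2 = 1 ∧ 2*j+1 ≤ x ∧ x < 2*(j + l.length) := by
  induction l generalizing j with
  | nil => simp [phiAux]
  | cons a l ih =>
    rw [phiAux_cons]
    by_cases h : a % 2 = 1 <;> simp only [h, if_true, if_false] <;> intro x hx
    · rcases List.mem_cons.mp hx with rfl | hx
      · refine ⟨by omega, by omega, by simp; omega⟩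
      · have := ih (j+1) x hx; simp at this ⊢; omega
    · have := ih (j+1) x hx; simp at this ⊢; omega

lemma phiAux_snd_pairwise (j : ℕ) (l : List ℕ) :
    (phiAux j l).2.Pairwise (· < ·) := by
  induction l generalizing j with
  | nil => simp [phiAux]
  | cons a l ih =>
    rw [phiAux_cons]
    by_cases h : a % 2 = 1 <;> simp only [h, if_true, if_false]
    · refine List.Pairwise.cons (fun y hy => ?_) (ih (j+1))
      have := (phiAux_snd_facts (j+1) l y hy).2.1
      omega
    · exact ih (j+1)

instance : IsTrans ℕ (fun x y => x + 2 ≤ y) := ⟨fun a b c h1 h2 => by omega⟩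

lemma phiAux_fst_pairwise (j : ℕ) (l : List ℕ) (hc : l.IsChain gapA) :
    (phiAux j l).1.Pairwise (fun x y => x + 2 ≤ y) :=
  List.isChain_iff_pairwise.mp (phiAux_fst_chain j l hc)

lemma phiAux_fst_lb (j : ℕ) (l : List ℕ) (hc : l.IsChain gapA)
    (h2 : ∀ x ∈ l, 2 ≤ x) :
    ∀ x ∈ (phiAux j l).1, 2 * ocount l + 2 ≤ x := by
  cases l with
  | nil => simp [phiAux]
  | cons a l' =>
    have hp := phiAux_fst_pairwise j _ hc
    rw [phiAux_cons] at hp ⊢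
    have ha2 : 2 ≤ a := h2 a (by simp)
    by_cases h : a % 2 = 1 <;> simp only [h, if_true, if_false] at hp ⊢ <;>
      rw [ocount_cons] <;> simp only [h, if_true, if_false] <;>
      [skip; skip] <;> intro x hx <;>
      rcases List.mem_cons.mp hx with rfl | hx
    · omega
    · have := (List.pairwise_cons.mp hp).1 x hx; omega
    · omega
    · have := (List.pairwise_cons.mp hp).1 x hx; omega



def psiAux : ℕ → Multiset ℕ → List ℕ → List ℕ
  | _, _, [] => []
  | j, v, a :: p =>
    (a + (if (2*j+1) ∈ v then 1 else 0) - 2 * v.countP (fun m => 2*j+1 ≤ m))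
      :: psiAux (j+1) v p

lemma psiAux_cons (j : ℕ) (v : Multiset ℕ) (a : ℕ) (p : List ℕ) :
    psiAux j v (a :: p) =
      (a + (if (2*j+1) ∈ v then 1 else 0) - 2 * v.countP (fun m => 2*j+1 ≤ m))
        :: psiAux (j+1) v p := rfl

lemma psiAux_length (j : ℕ) (v : Multiset ℕ) (p : List ℕ) :
    (psiAux j v p).length = p.length := by
  induction p generalizing j with
  | nil => rfl
  | cons a p ih => simp [psiAux_cons, ih]

lemma filter_split (v : Multiset ℕ) (hodd : ∀ m ∈ v, m % 2 = 1) (hnd : v.Nodup)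
    (j : ℕ) :
    v.filter (fun m => 2*j+1 ≤ m) =
      (if (2*j+1) ∈ v then {2*j+1} else 0) + v.filter (fun m => 2*(j+1)+1 ≤ m) := by
  induction v using Multiset.induction_on with
  | empty => simp
  | cons a t ih =>
    rw [Multiset.nodup_cons] at hnd
    have hat : a % 2 = 1 := hodd a (Multiset.mem_cons_self a t)
    have ih' := ih (fun m hm => hodd m (Multiset.mem_cons_of_mem hm)) hnd.2
    by_cases hej : a = 2*j+1
    · have hmem : (2*j+1) ∈ a ::ₘ t := by rw [← hej]; exact Multiset.mem_cons_self a t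
      have hnm : (2*j+1 : ℕ) ∉ t := by rw [← hej]; exact hnd.1
      rw [Multiset.filter_cons, Multiset.filter_cons, if_pos hmem,
        if_pos (show 2*j+1 ≤ a by omega), if_neg (show ¬ 2*(j+1)+1 ≤ a by omega)]
      rw [if_neg hnm] at ih'
      rw [ih', hej]
    · have h1 : ((2*j+1) ∈ a ::ₘ t) ↔ ((2*j+1) ∈ t) := by
        constructor
        · intro h; rcases Multiset.mem_cons.mp h with h | h; · omega
          · exact h
        · exact Multiset.mem_cons_of_mem
      have h2 : (2*j+1 ≤ a) ↔ (2*(j+1)+1 ≤ a) := by omega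
      rw [Multiset.filter_cons, Multiset.filter_cons]
      by_cases hle : 2*j+1 ≤ a
      · rw [if_pos hle, if_pos (by omega : 2*(j+1)+1 ≤ a)]
        rw [ih']
        simp only [h1]
        rw [add_left_comm]
      · rw [if_neg hle, if_neg (by omega : ¬ 2*(j+1)+1 ≤ a)]
        rw [ih']
        simp only [h1]
        rw [zero_add, zero_add]

lemma countP_split (v : Multiset ℕ) (hodd : ∀ m ∈ v, m % 2 = 1) (hnd : v.Nodup)
    (j : ℕ) :
    v.countP (fun m => 2*j+1 ≤ m) =
      (if (2*j+1) ∈ v then 1 else 0) + v.countP (fun m => 2*(j+1)+1 ≤ m) := by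
  rw [Multiset.countP_eq_card_filter, Multiset.countP_eq_card_filter,
    filter_split v hodd hnd j]
  rw [Multiset.card_add]
  congr 1
  split <;> simp


lemma psi_phi (l : List ℕ) : ∀ (j : ℕ) (w : Multiset ℕ), (∀ m ∈ w, m < 2*j+1) →
    psiAux j (w + ↑(phiAux j l).2) (phiAux j l).1 = l := by
  induction l with
  | nil => intro j w hw; rfl
  | cons a l ih =>
    intro j w hw
    have hv' := phiAux_snd_facts (j+1) l
    have hlen : (phiAux (j+1) l).2.length = ocount l := phiAux_snd_length (j+1) l
    have hcv : (↑(phiAux (j+1) l).2 : Multiset ℕ).countP (fun m => 2*j+1 ≤ m)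
        = ocount l := by
      rw [Multiset.countP_eq_card.mpr (fun x hx => by
        have := (hv' x (by exact_mod_cast hx)).2.1; omega)]
      simp [hlen]
    have hnv : (2*j+1 : ℕ) ∉ (↑(phiAux (j+1) l).2 : Multiset ℕ) := by
      intro hmm
      have := (hv' _ (by exact_mod_cast hmm)).2.1; omega
    rw [phiAux_cons]
    by_cases h : a % 2 = 1 <;> simp only [h, if_true, if_false]
    · have hV : (w + ↑((2*j+1) :: (phiAux (j+1) l).2) : Multiset ℕ)
          = (w + {2*j+1}) + ↑(phiAux (j+1) l).2 := by
        rw [← Multiset.cons_coe, ← Multiset.singleton_add, add_assoc]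
      rw [hV, psiAux_cons]
      have hcw : (w + ({2*j+1} : Multiset ℕ)).countP (fun m => 2*j+1 ≤ m) = 1 := by
        rw [Multiset.countP_add,
          Multiset.countP_eq_zero.mpr (fun m hm => by have := hw m hm; omega)]
        rw [show ({2*j+1} : Multiset ℕ) = (2*j+1) ::ₘ 0 from rfl, Multiset.countP_cons]
        simp
      have hmem : (2*j+1 : ℕ) ∈ (w + {2*j+1}) + (↑(phiAux (j+1) l).2 : Multiset ℕ) := by
        simp
      rw [if_pos hmem, Multiset.countP_add, hcw, hcv]
      congr 1
      · omega
      · exact ih (j+1) (w + {2*j+1}) (fun m hm => by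
          rcases Multiset.mem_add.mp hm with hm | hm
          · have := hw m hm; omega
          · have : m = 2*j+1 := Multiset.mem_singleton.mp hm; omega)
    · rw [psiAux_cons]
      have hcw : w.countP (fun m => 2*j+1 ≤ m) = 0 :=
        Multiset.countP_eq_zero.mpr (fun m hm => by have := hw m hm; omega)
      have hmem : (2*j+1 : ℕ) ∉ w + (↑(phiAux (j+1) l).2 : Multiset ℕ) := by
        rw [Multiset.mem_add]
        rintro (hm | hm)
        · have := hw _ hm; omega
        · exact hnv hm
      rw [if_neg hmem, Multiset.countP_add, hcw, hcv]
      congr 1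
      · omega
      · exact ih (j+1) w (fun m hm => by have := hw m hm; omega)

lemma countP_mono (v : Multiset ℕ) (j : ℕ) (hodd : ∀ m ∈ v, m % 2 = 1)
    (hnd : v.Nodup) :
    v.countP (fun m => 2*(j+1)+1 ≤ m) ≤ v.countP (fun m => 2*j+1 ≤ m) := by
  have h := countP_split v hodd hnd j
  by_cases hm : (2*j+1) ∈ v <;> simp only [hm, if_true, if_false] at h <;> omega

lemma ocount_psi (p : List ℕ) : ∀ (j : ℕ) (v : Multiset ℕ),
    (∀ m ∈ v, m % 2 = 1) → v.Nodup →
    (∀ m ∈ v, 2*j+1 ≤ m → m < 2*j+1+2*p.length) →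
    (∀ x ∈ p, x % 2 = 0) →
    (∀ x ∈ p, 2 * v.countP (fun m => 2*j+1 ≤ m) + 2 ≤ x) →
    ocount (psiAux j v p) = v.countP (fun m => 2*j+1 ≤ m) := by
  induction p with
  | nil =>
    intro j v hodd hnd hbd heven hlb
    simp only [psiAux, ocount_nil]
    rw [eq_comm, Multiset.countP_eq_zero]
    intro m hm hle
    have := hbd m hm hle
    simp at this
    omega
  | cons a p ih =>
    intro j v hodd hnd hbd heven hlb
    rw [psiAux_cons, ocount_cons]
    have hsplit := countP_split v hodd hnd j
    have hmono := countP_mono v j hodd hnd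
    have ha := heven a (by simp)
    have hla := hlb a (by simp)
    have ihh := ih (j+1) v hodd hnd
      (fun m hm hle => by have := hbd m hm (by omega); simp at this ⊢; omega)
      (fun x hx => heven x (by simp [hx]))
      (fun x hx => by have := hlb x (by simp [hx]); omega)
    rw [ihh]
    by_cases hm : (2*j+1) ∈ v <;> simp only [hm, if_true, if_false] at hsplit ⊢
    · rw [if_pos (by omega)]
      omega
    · rw [if_neg (by omega)]
      omega

lemma phi_psi (p : List ℕ) : ∀ (j : ℕ) (v : Multiset ℕ),
    (∀ m ∈ v, m % 2 = 1) → v.Nodup →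
    (∀ m ∈ v, 2*j+1 ≤ m → m < 2*j+1+2*p.length) →
    (∀ x ∈ p, x % 2 = 0) →
    (∀ x ∈ p, 2 * v.countP (fun m => 2*j+1 ≤ m) + 2 ≤ x) →
    (phiAux j (psiAux j v p)).1 = p ∧
      (↑(phiAux j (psiAux j v p)).2 : Multiset ℕ) = v.filter (fun m => 2*j+1 ≤ m) := by
  induction p with
  | nil =>
    intro j v hodd hnd hbd heven hlb
    refine ⟨rfl, ?_⟩
    rw [eq_comm, Multiset.filter_eq_nil.mpr]
    · rfl
    · intro m hm hle
      have := hbd m hm hle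
      simp at this
      omega
  | cons a p ih =>
    intro j v hodd hnd hbd heven hlb
    have hsplit := countP_split v hodd hnd j
    have hfsplit := filter_split v hodd hnd j
    have hmono := countP_mono v j hodd hnd
    have ha := heven a (by simp)
    have hla := hlb a (by simp)
    have hbd' : ∀ m ∈ v, 2*(j+1)+1 ≤ m → m < 2*(j+1)+1+2*p.length :=
      fun m hm hle => by have := hbd m hm (by omega); simp at this ⊢; omega
    have heven' : ∀ x ∈ p, x % 2 = 0 := fun x hx => heven x (by simp [hx])
    have hlb' : ∀ x ∈ p, 2 * v.countP (fun m => 2*(j+1)+1 ≤ m) + 2 ≤ x :=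
      fun x hx => by have := hlb x (by simp [hx]); omega
    have ihh := ih (j+1) v hodd hnd hbd' heven' hlb'
    have hoc := ocount_psi p (j+1) v hodd hnd hbd' heven' hlb'
    rw [psiAux_cons, phiAux_cons]
    by_cases hm : (2*j+1) ∈ v <;>
      simp only [hm, if_true, if_false] at hsplit hfsplit ⊢
    · rw [if_pos (by omega : (a + 1 - 2 * Multiset.countP (fun m => 2*j+1 ≤ m) v) % 2 = 1)]
      constructor
      · simp only [List.cons.injEq]
        refine ⟨by rw [hoc]; omega, ihh.1⟩
      · rw [← Multiset.cons_coe, Multiset.cons_coe]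
        rw [show ((((2*j+1) :: (phiAux (j+1) (psiAux (j+1) v p)).2 : List ℕ)) : Multiset ℕ)
          = (2*j+1) ::ₘ ↑(phiAux (j+1) (psiAux (j+1) v p)).2 from rfl]
        rw [ihh.2, hfsplit, Multiset.singleton_add]
    · rw [if_neg (by omega : ¬ (a + 0 - 2 * Multiset.countP (fun m => 2*j+1 ≤ m) v) % 2 = 1)]
      constructor
      · simp only [List.cons.injEq]
        refine ⟨by rw [hoc]; omega, ihh.1⟩
      · rw [ihh.2, hfsplit, zero_add]

lemma psi_lb (p : List ℕ) : ∀ (j : ℕ) (v : Multiset ℕ),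
    (∀ x ∈ p, 2 * v.countP (fun m => 2*j+1 ≤ m) + 2 ≤ x) →
    (∀ m ∈ v, m % 2 = 1) → v.Nodup →
    ∀ x ∈ psiAux j v p, 2 ≤ x := by
  induction p with
  | nil => intro j v _ _ _ x hx; simp [psiAux] at hx
  | cons a p ih =>
    intro j v hlb hodd hnd x hx
    have hmono := countP_mono v j hodd hnd
    rw [psiAux_cons] at hx
    rcases List.mem_cons.mp hx with rfl | hx
    · have := hlb a (by simp)
      split <;> omega
    · exact ih (j+1) v (fun y hy => by have := hlb y (by simp [hy]); omega) hodd hnd x hx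

lemma psi_chain (p : List ℕ) : ∀ (j : ℕ) (v : Multiset ℕ),
    (∀ m ∈ v, m % 2 = 1) → v.Nodup →
    p.IsChain (fun x y => x + 2 ≤ y) →
    (∀ x ∈ p, x % 2 = 0) →
    (∀ x ∈ p, 2 * v.countP (fun m => 2*j+1 ≤ m) + 2 ≤ x) →
    (psiAux j v p).IsChain gapA := by
  induction p with
  | nil => intro j v _ _ _ _ _; simp [psiAux]
  | cons a p ih =>
    intro j v hodd hnd hc heven hlb
    cases p with
    | nil => simp [psiAux]
    | cons b p' =>
      have hsplit := countP_split v hodd hnd j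
      have hmono := countP_mono v j hodd hnd
      have hab : a + 2 ≤ b := (List.isChain_cons_cons.mp hc).1
      have ha := heven a (by simp)
      have hb := heven b (by simp)
      have hla := hlb a (by simp)
      have hlb2 := hlb b (by simp)
      have ihh := ih (j+1) v hodd hnd (List.isChain_cons_cons.mp hc).2
        (fun x hx => heven x (by simp [hx]))
        (fun x hx => by have := hlb x (by simp [hx]); omega)
      rw [psiAux_cons, psiAux_cons]
      rw [psiAux_cons] at ihh
      refine List.isChain_cons_cons.mpr ⟨?_, ihh⟩
      constructor
      · by_cases hm : (2*j+1) ∈ v <;> by_cases hm' : (2*(j+1)+1) ∈ v <;>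
          simp only [hm, hm', if_true, if_false] at hsplit ⊢ <;> omega
      · intro hpa hpb
        by_cases hm : (2*j+1) ∈ v <;> by_cases hm' : (2*(j+1)+1) ∈ v <;>
          simp only [hm, hm', if_true, if_false] at hsplit hpa hpb ⊢ <;> omega

lemma LGCond_symm : Symmetric LGCond := by
  intro a b h
  obtain ⟨h1, h2⟩ := h
  exact ⟨by rwa [abs_sub_comm], fun hb ha => by rw [abs_sub_comm]; exact h2 ha hb⟩

instance : IsTrans ℕ gapA :=
  ⟨fun a b c h1 h2 => by
    obtain ⟨h1a, _⟩ := h1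
    obtain ⟨h2a, _⟩ := h2
    exact ⟨by omega, fun _ _ => by omega⟩⟩

lemma gapA_of_LGCond {a b : ℕ} (hab : a ≤ b) (h : LGCond a b) : gapA a b := by
  obtain ⟨h1, h2⟩ := h
  have habs : |(a : ℤ) - (b : ℤ)| = (b : ℤ) - a := by
    rw [abs_sub_comm, abs_of_nonneg (sub_nonneg.mpr (by exact_mod_cast hab))]
  rw [habs] at h1 h2
  refine ⟨by omega, fun ha hb => ?_⟩
  have := h2 (Nat.odd_iff.mpr ha) (Nat.odd_iff.mpr hb)
  omega

lemma LGCond_of_gapA {a b : ℕ} (h : gapA a b) : LGCond a b := by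
  obtain ⟨h1, h2⟩ := h
  have habs : |(a : ℤ) - (b : ℤ)| = (b : ℤ) - a := by
    rw [abs_sub_comm, abs_of_nonneg (by omega : (0:ℤ) ≤ (b : ℤ) - a)]
  rw [LGCond, habs]
  constructor
  · omega
  · intro ha hb
    rw [Nat.odd_iff] at ha hb
    have := h2 ha hb
    omega

lemma sorted_of_chain_gapA {l : List ℕ} (h : l.IsChain gapA) : l.Pairwise (· ≤ ·) :=
  (List.isChain_iff_pairwise.mp h).imp (fun hab => by have := hab.1; omega)

lemma sorted_of_chain_two {l : List ℕ} (h : l.IsChain (fun x y => x + 2 ≤ y)) :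
    l.Pairwise (· ≤ ·) :=
  (List.isChain_iff_pairwise.mp h).imp (fun hab => by omega)

lemma sort_coe_eq {l : List ℕ} (h : l.Pairwise (· ≤ ·)) :
    Multiset.sort (↑l : Multiset ℕ) (· ≤ ·) = l := by
  refine List.Perm.eq_of_pairwise' (Multiset.pairwise_sort _ _) h ?_
  rw [← Multiset.coe_eq_coe, Multiset.sort_eq]


def phiM (m : Multiset ℕ) : Multiset ℕ × Multiset ℕ :=
  (↑(phiAux 0 (m.sort (· ≤ ·))).1, ↑(phiAux 0 (m.sort (· ≤ ·))).2)

def psiM (σ : Multiset ℕ × Multiset ℕ) : Multiset ℕ :=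
  ↑(psiAux 0 σ.2 (σ.1.sort (· ≤ ·)))

def setA (n : ℕ) : Set (Multiset ℕ) :=
  {π : Multiset ℕ | IsPartitionOf n π ∧ (∀ x ∈ π, x ≠ 1) ∧
    Multiset.Pairwise LGCond π}

def setB (n : ℕ) : Set (Multiset ℕ × Multiset ℕ) :=
  {σ : Multiset ℕ × Multiset ℕ | IsSignedPartitionOf n σ.1 σ.2 ∧
    (∀ x ∈ σ.1, Even x) ∧ σ.1.Nodup ∧
    (∀ x ∈ σ.2, Odd x) ∧ σ.2.Nodup ∧
    (∀ x ∈ σ.2, x < 2 * Multiset.card σ.1) ∧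
    (∀ x ∈ σ.1, 2 * (Multiset.card σ.2 : ℤ) + (if 1 ∈ σ.2 then 1 else 0)
      < (x : ℤ))}

lemma memA_props {n : ℕ} {π : Multiset ℕ} (h : π ∈ setA n) :
    (π.sort (· ≤ ·)).IsChain gapA ∧ (∀ x ∈ π.sort (· ≤ ·), 2 ≤ x) ∧
      (π.sort (· ≤ ·)).sum = n := by
  obtain ⟨⟨hpos, hsum⟩, hne, hpw⟩ := h
  have hcoe : ↑(π.sort (· ≤ ·)) = π := Multiset.sort_eq _ _
  have hsorted : (π.sort (· ≤ ·)).Pairwise (· ≤ ·) := Multiset.pairwise_sort _ _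
  have hs' : (π.sort (· ≤ ·)).Pairwise (· ≤ ·) := hsorted
  have hpw' : (π.sort (· ≤ ·)).Pairwise LGCond := by
    rw [← hcoe] at hpw
    exact (haveI : Std.Symm LGCond := ⟨fun a b h => LGCond_symm h⟩; Multiset.pairwise_coe_iff_pairwise).mp hpw
  have hmem : ∀ x ∈ π.sort (· ≤ ·), x ∈ π := by
    intro x hx; rw [← hcoe]; exact_mod_cast hx
  refine ⟨List.Pairwise.isChain ((hs'.and hpw').imp fun hab =>
      gapA_of_LGCond hab.1 hab.2), fun x hx => ?_, ?_⟩
  · have h1 := hpos x (hmem x hx)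
    have h2 := hne x (hmem x hx)
    omega
  · have h3 : (π.sort (· ≤ ·)).sum = π.sum := by
      conv_rhs => rw [← hcoe]
      rw [Multiset.sum_coe]
    rw [h3, hsum]

lemma memA_of_list {n : ℕ} {l : List ℕ} (hc : l.IsChain gapA)
    (h2 : ∀ x ∈ l, 2 ≤ x) (hs : l.sum = n) : (↑l : Multiset ℕ) ∈ setA n := by
  refine ⟨⟨fun x hx => by have := h2 x (by exact_mod_cast hx); omega,
    by rw [Multiset.sum_coe]; exact hs⟩,
    fun x hx => by have := h2 x (by exact_mod_cast hx); omega, ?_⟩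
  exact (haveI : Std.Symm LGCond := ⟨fun a b h => LGCond_symm h⟩; Multiset.pairwise_coe_iff_pairwise).mpr
    ((List.isChain_iff_pairwise.mp hc).imp LGCond_of_gapA)

lemma phiM_mem {n : ℕ} {π : Multiset ℕ} (h : π ∈ setA n) : phiM π ∈ setB n := by
  obtain ⟨hc, h2, hsum⟩ := memA_props h
  set l := π.sort (· ≤ ·) with hl
  have hflb := phiAux_fst_lb 0 l hc h2
  have hfe := phiAux_fst_even 0 l
  have hsf := phiAux_snd_facts 0 l
  have hfl := phiAux_fst_length 0 l
  have hslen := phiAux_snd_length 0 l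
  have hsum2 := phiAux_sum 0 l
  have hcard1 : Multiset.card (↑(phiAux 0 l).1 : Multiset ℕ) = l.length := by
    rw [Multiset.coe_card, hfl]
  have hcard2 : Multiset.card (↑(phiAux 0 l).2 : Multiset ℕ) = ocount l := by
    rw [Multiset.coe_card, hslen]
  simp only [setB, phiM, IsSignedPartitionOf, Set.mem_setOf_eq, ← hl]
  refine ⟨⟨fun x hx => ?_, fun x hx => ?_, ?_⟩, fun x hx => ?_, ?_, fun x hx => ?_,
    ?_, fun x hx => ?_, fun x hx => ?_⟩
  · have := hflb x (by exact_mod_cast hx); omega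
  · have := (hsf x (by exact_mod_cast hx)).1; omega
  · rw [Multiset.sum_coe, Multiset.sum_coe]
    omega
  · have := hfe x (by exact_mod_cast hx)
    exact Nat.even_iff.mpr this
  · rw [Multiset.coe_nodup]
    exact (phiAux_fst_pairwise 0 l hc).imp (fun hab => by omega)
  · have := (hsf x (by exact_mod_cast hx)).1
    exact Nat.odd_iff.mpr this
  · rw [Multiset.coe_nodup]
    exact (phiAux_snd_pairwise 0 l).imp (fun hab => by omega)
  · have := (hsf x (by exact_mod_cast hx)).2.2
    rw [hcard1]
    omega
  · rw [hcard2]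
    have := hflb x (by exact_mod_cast hx)
    split <;> push_cast <;> omega

lemma psiM_phiM {n : ℕ} {π : Multiset ℕ} (h : π ∈ setA n) : psiM (phiM π) = π := by
  obtain ⟨hc, h2, _⟩ := memA_props h
  set l := π.sort (· ≤ ·) with hl
  have hsorted1 : (phiAux 0 l).1.Pairwise (· ≤ ·) :=
    sorted_of_chain_two (phiAux_fst_chain 0 l hc)
  show ↑(psiAux 0 (↑(phiAux 0 l).2) ((↑(phiAux 0 l).1 : Multiset ℕ).sort (· ≤ ·))) = π
  rw [sort_coe_eq hsorted1]
  have hw := psi_phi l 0 0 (by simp)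
  rw [zero_add] at hw
  rw [hw]
  exact Multiset.sort_eq _ _

lemma psiM_mem_and_phiM {n : ℕ} {σ : Multiset ℕ × Multiset ℕ} (h : σ ∈ setB n) :
    psiM σ ∈ setA n ∧ phiM (psiM σ) = σ := by
  obtain ⟨⟨hpos1, hpos2, hsum⟩, heven, hnd1, hodd, hnd2, hbd, hlow⟩ := h
  set p := σ.1.sort (· ≤ ·) with hp
  have hp_coe : ↑p = σ.1 := Multiset.sort_eq _ _
  have hp_sorted : p.Pairwise (· ≤ ·) := Multiset.pairwise_sort _ _
  have hp_nodup : p.Nodup := by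
    rw [← Multiset.coe_nodup, hp_coe]; exact hnd1
  have hp_mem : ∀ x ∈ p, x ∈ σ.1 := fun x hx => by
    rw [← hp_coe]; exact_mod_cast hx
  have hp_even : ∀ x ∈ p, x % 2 = 0 := fun x hx =>
    Nat.even_iff.mp (heven x (hp_mem x hx))
  have hp_len : p.length = Multiset.card σ.1 := Multiset.length_sort _
  have hodd' : ∀ m ∈ σ.2, m % 2 = 1 := fun m hm => Nat.odd_iff.mp (hodd m hm)
  have hp_lt : p.Pairwise (· < ·) := (hp_sorted.and hp_nodup).imp (fun h => lt_of_le_of_ne h.1 h.2)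
  have hp_chain : p.IsChain (fun a b => a + 2 ≤ b) := by
    refine List.Pairwise.isChain ?_
    rw [List.pairwise_iff_forall_sublist] at hp_lt ⊢
    intro a b hab
    have ha := hp_even a (hab.subset (by simp))
    have hb := hp_even b (hab.subset (by simp))
    have := hp_lt hab
    omega
  have hcount : σ.2.countP (fun m => 2*0+1 ≤ m) = Multiset.card σ.2 :=
    Multiset.countP_eq_card.mpr (fun m hm => by have := hodd' m hm; omega)
  have hlb0 : ∀ x ∈ p, 2 * σ.2.countP (fun m => 2*0+1 ≤ m) + 2 ≤ x := by
    intro x hx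
    have h1 := hlow x (hp_mem x hx)
    have h2 := hp_even x hx
    rw [hcount]
    split at h1 <;> omega
  have hbd0 : ∀ m ∈ σ.2, 2*0+1 ≤ m → m < 2*0+1+2*p.length := by
    intro m hm _
    have := hbd m hm
    omega
  have hgood_chain := psi_chain p 0 σ.2 hodd' hnd2 hp_chain hp_even hlb0
  have hgood_lb := psi_lb p 0 σ.2 hlb0 hodd' hnd2
  have hphi := phi_psi p 0 σ.2 hodd' hnd2 hbd0 hp_even hlb0
  have hfilter : σ.2.filter (fun m => 2*0+1 ≤ m) = σ.2 :=
    Multiset.filter_eq_self.mpr (fun m hm => by have := hodd' m hm; omega)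
  have hsnd : (↑(phiAux 0 (psiAux 0 σ.2 p)).2 : Multiset ℕ) = σ.2 := by
    rw [hphi.2, hfilter]
  have hsum2 := phiAux_sum 0 (psiAux 0 σ.2 p)
  rw [hphi.1] at hsum2
  have hsum3 : (phiAux 0 (psiAux 0 σ.2 p)).2.sum = σ.2.sum := by
    rw [← Multiset.sum_coe, hsnd]
  have hsump : p.sum = σ.1.sum := by rw [← Multiset.sum_coe, hp_coe]
  have hsuml : (psiAux 0 σ.2 p).sum = n := by omega
  refine ⟨memA_of_list hgood_chain hgood_lb hsuml, ?_⟩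
  have hsorted : (psiAux 0 σ.2 p).Pairwise (· ≤ ·) :=
    sorted_of_chain_gapA hgood_chain
  show (↑(phiAux 0 ((↑(psiAux 0 σ.2 p) : Multiset ℕ).sort (· ≤ ·))).1,
        ↑(phiAux 0 ((↑(psiAux 0 σ.2 p) : Multiset ℕ).sort (· ≤ ·))).2) = σ
  rw [sort_coe_eq hsorted]
  exact Prod.ext (by rw [hphi.1, hp_coe]) (by rw [hsnd])

lemma main (n : ℕ) : (setA n).ncard = (setB n).ncard := by
  have hinj : Set.InjOn phiM (setA n) := fun a ha b hb hab => by
    rw [← psiM_phiM ha, ← psiM_phiM hb, hab]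
  have himg : phiM '' setA n = setB n := by
    apply Set.Subset.antisymm
    · rintro σ ⟨π, hπ, rfl⟩
      exact phiM_mem hπ
    · intro σ hσ
      obtain ⟨hmem, heq⟩ := psiM_mem_and_phiM hσ
      exact ⟨psiM σ, hmem, heq⟩
  rw [← himg, Set.ncard_image_of_injOn hinj]

end LG2

/-- Theorem 11: LG₂(n) = T(n). -/
theorem little_gollnitz_second_signed_T (n : ℕ) :
    {π : Multiset ℕ | IsPartitionOf n π ∧ (∀ x ∈ π, x ≠ 1) ∧
      Multiset.Pairwise LGCond π}.ncard =
    {σ : Multiset ℕ × Multiset ℕ | IsSignedPartitionOf n σ.1 σ.2 ∧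
      (∀ x ∈ σ.1, Even x) ∧ σ.1.Nodup ∧
      (∀ x ∈ σ.2, Odd x) ∧ σ.2.Nodup ∧
      (∀ x ∈ σ.2, x < 2 * Multiset.card σ.1) ∧
      (∀ x ∈ σ.1, 2 * (Multiset.card σ.2 : ℤ) + (if 1 ∈ σ.2 then 1 else 0)
        < (x : ℤ))}.ncard :=
  LG2.main n
end

section
/- For every nonnegative integer n, the number of partitions of n into parts at least 2 in which any two parts differ by at least 2, and by at least 4 if both parts are odd, equals the number of signed partitions of n in which the positive parts are odd and each at least 2ℓ⁺, where ℓ⁺ is the number of positive parts, and the negative part sizes are odd, distinct, and each at most 2ℓ⁺. -/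
lemma LGCond_iff (a b : ℕ) : LGCond a b ↔
    ((a + 2 ≤ b ∨ b + 2 ≤ a) ∧ (a % 2 = 1 → b % 2 = 1 → (a + 4 ≤ b ∨ b + 4 ≤ a))) := by
  unfold LGCond
  rw [le_abs, le_abs, Nat.odd_iff, Nat.odd_iff]
  omega

lemma lg_symm : Symmetric LGCond := by
  intro a b h
  rw [LGCond_iff] at h ⊢
  tauto

namespace MyAux
open Multiset

lemma pairwise_cons_iff {α : Type*} [DecidableEq α] {r : α → α → Prop} (hr : Symmetric r)
    {a : α} {s : Multiset α} :
    (a ::ₘ s).Pairwise r ↔ (∀ b ∈ s, r a b) ∧ s.Pairwise r := by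
  constructor
  · rintro ⟨l, hl, hp⟩
    have ha : a ∈ l := by
      rw [← Multiset.mem_coe, ← hl]; exact Multiset.mem_cons_self a s
    have hperm : List.Perm l (a :: l.erase a) := List.perm_cons_erase ha
    have hp2 : (a :: l.erase a).Pairwise r := hp.perm hperm (fun h => hr h)
    have hs : s = ((l.erase a : List α) : Multiset α) := by
      have h1 : (a ::ₘ s) = a ::ₘ ((l.erase a : List α) : Multiset α) := by
        rw [hl, Multiset.cons_coe]
        exact_mod_cast Quot.sound hperm
      exact (Multiset.cons_inj_right a).mp h1
    rw [List.pairwise_cons] at hp2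
    constructor
    · intro b hb
      exact hp2.1 b (by rwa [hs, Multiset.mem_coe] at hb)
    · exact ⟨l.erase a, hs, hp2.2⟩
  · rintro ⟨h1, l, hl, hp⟩
    refine ⟨a :: l, by rw [hl, Multiset.cons_coe], List.pairwise_cons.mpr ⟨fun b hb => ?_, hp⟩⟩
    exact h1 b (by rw [hl, Multiset.mem_coe]; exact hb)

lemma pairwise_map_iff {α β : Type*} {r : β → β → Prop} (hr : Symmetric r) (f : α → β)
    (s : Multiset α) :
    (s.map f).Pairwise r ↔ s.Pairwise (fun a b => r (f a) (f b)) := by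
  refine Quotient.inductionOn s fun l => ?_
  show ((l : Multiset α).map f).Pairwise r ↔ Multiset.Pairwise _ (l : Multiset α)
  have h0 : ((l : Multiset α)).map f = ↑(l.map f) := by simp
  haveI : Std.Symm r := ⟨fun a b h => hr h⟩
  haveI : Std.Symm (fun a b => r (f a) (f b)) := ⟨fun a b h => hr h⟩
  rw [h0, Multiset.pairwise_coe_iff_pairwise,
    Multiset.pairwise_coe_iff_pairwise, List.pairwise_map]

lemma pairwise_of_mem {α : Type*} {r : α → α → Prop} (hr : Symmetric r) {s : Multiset α}
    (hp : s.Pairwise r) {a b : α} (ha : a ∈ s) (hb : b ∈ s) (hab : a ≠ b) : r a b := by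
  obtain ⟨l, hl, hpl⟩ := hp
  subst hl
  haveI : Std.Symm r := ⟨fun a b h => hr h⟩
  exact List.Pairwise.forall hpl (Multiset.mem_coe.mp ha) (Multiset.mem_coe.mp hb) hab

lemma sum_map_add_const (s : Multiset ℕ) (c : ℕ) :
    (s.map (· + c)).sum = s.sum + c * Multiset.card s := by
  have : (s.map (· + c)) = s.map (fun x => id x + (fun _ => c) x) := by rfl
  rw [this, Multiset.sum_map_add]
  simp [Multiset.map_id', mul_comm]

lemma sum_odds_range (k : ℕ) : ((Multiset.range k).map (fun i => 2 * i + 1)).sum = k * k := by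
  induction k with
  | zero => simp
  | succ k ih => rw [Multiset.range_succ, Multiset.map_cons, Multiset.sum_cons, ih]; ring

lemma sum_le_of_nodup_odd_le (T : Multiset ℕ) (hnd : T.Nodup) (k : ℕ)
    (h : ∀ x ∈ T, x % 2 = 1 ∧ x ≤ 2 * k) : T.sum ≤ k * k := by
  have hsub : T ⊆ (Multiset.range k).map (fun i => 2 * i + 1) := by
    intro x hx
    obtain ⟨h1, h2⟩ := h x hx
    rw [Multiset.mem_map]
    exact ⟨x / 2, by rw [Multiset.mem_range]; omega, by omega⟩
  have hle : T ≤ (Multiset.range k).map (fun i => 2 * i + 1) :=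
    (Multiset.le_iff_subset hnd).mpr hsub
  obtain ⟨u, hu⟩ := Multiset.le_iff_exists_add.mp hle
  have hsum : ((Multiset.range k).map (fun i => 2 * i + 1)).sum = k * k := sum_odds_range k
  calc T.sum ≤ T.sum + u.sum := Nat.le_add_right _ _
    _ = k * k := by rw [← Multiset.sum_add, ← hu, hsum]

lemma finite_parts (n : ℕ) : {s : Multiset ℕ | (∀ x ∈ s, 0 < x) ∧ s.sum = n}.Finite := by
  have : {s : Multiset ℕ | (∀ x ∈ s, 0 < x) ∧ s.sum = n} = (fun p : n.Partition => p.parts) '' Set.univ := by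
    ext s
    constructor
    · rintro ⟨h1, h2⟩; exact ⟨⟨s, fun {i} hi => h1 i hi, h2⟩, trivial, rfl⟩
    · rintro ⟨p, -, rfl⟩; exact ⟨fun i hi => p.parts_pos hi, p.parts_sum⟩
  rw [this]
  exact Set.finite_univ.image _

lemma finite_parts_le (M : ℕ) : {s : Multiset ℕ | (∀ x ∈ s, 0 < x) ∧ s.sum ≤ M}.Finite := by
  have hsub : {s : Multiset ℕ | (∀ x ∈ s, 0 < x) ∧ s.sum ≤ M} ⊆
      ⋃ m ∈ Set.Iic M, {s : Multiset ℕ | (∀ x ∈ s, 0 < x) ∧ s.sum = m} := by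
    rintro s ⟨h1, h2⟩
    exact Set.mem_biUnion h2 ⟨h1, rfl⟩
  exact Set.Finite.subset ((Set.finite_Iic M).biUnion fun m _ => finite_parts m) hsub

end MyAux

namespace MyAux
open Multiset

lemma pairwise_mem_imp {α : Type*} {r r' : α → α → Prop} {s : Multiset α}
    (h : ∀ a ∈ s, ∀ b ∈ s, r a b → r' a b) (hp : s.Pairwise r) : s.Pairwise r' := by
  obtain ⟨l, hl, hpl⟩ := hp
  subst hl
  exact ⟨l, rfl, List.Pairwise.imp_of_mem (fun ha hb hr => h _ ha _ hb hr) hpl⟩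

def LSet (k n : ℕ) : Set (Multiset ℕ) :=
  {π | (∀ x ∈ π, 2 ≤ x) ∧ Multiset.Pairwise LGCond π ∧ π.sum = n ∧ Multiset.card π = k}

def RSet (k n : ℕ) : Set (Multiset ℕ × Multiset ℕ) :=
  {σ | Multiset.card σ.1 = k ∧ (∀ x ∈ σ.1, Odd x ∧ 2 * k ≤ x) ∧ (∀ x ∈ σ.2, Odd x) ∧
    σ.2.Nodup ∧ (∀ x ∈ σ.2, x ≤ 2 * k) ∧ (σ.1.sum : ℤ) - (σ.2.sum : ℤ) = (n : ℤ)}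

lemma LSet_sum_lb {k n : ℕ} {π : Multiset ℕ} (h : π ∈ LSet k n) : 2 * k ≤ n := by
  obtain ⟨h2, -, hs, hc⟩ := h
  have := Multiset.card_nsmul_le_sum h2
  rw [hc, hs, smul_eq_mul] at this
  omega

lemma RSet_sum_lb {k n : ℕ} {σ : Multiset ℕ × Multiset ℕ} (h : σ ∈ RSet k n) :
    k * k + k ≤ n := by
  obtain ⟨hc, hA, hT, hnd, hTle, hsum⟩ := h
  have hA' : ∀ x ∈ σ.1, 2 * k + 1 ≤ x := by
    intro x hx
    obtain ⟨ho, hl⟩ := hA x hx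
    rw [Nat.odd_iff] at ho
    omega
  have h1 := Multiset.card_nsmul_le_sum hA'
  rw [hc, smul_eq_mul] at h1
  have h2 := sum_le_of_nodup_odd_le σ.2 hnd k
    (fun x hx => ⟨Nat.odd_iff.mp (hT x hx), hTle x hx⟩)
  have hcast : (σ.1.sum : ℤ) = (n : ℤ) + (σ.2.sum : ℤ) := by linarith
  have : σ.1.sum = n + σ.2.sum := by exact_mod_cast hcast
  nlinarith

lemma LSet_finite (k n : ℕ) : (LSet k n).Finite := by
  apply (finite_parts n).subset
  rintro π ⟨h2, -, hs, -⟩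
  exact ⟨fun x hx => by have := h2 x hx; omega, hs⟩

lemma RSet_finite (k n : ℕ) : (RSet k n).Finite := by
  apply (Set.Finite.prod (finite_parts_le (n + k * k)) (finite_parts_le (k * k))).subset
  rintro σ h
  obtain ⟨hc, hA, hT, hnd, hTle, hsum⟩ := h
  have hTs : σ.2.sum ≤ k * k := sum_le_of_nodup_odd_le σ.2 hnd k
    (fun x hx => ⟨Nat.odd_iff.mp (hT x hx), hTle x hx⟩)
  have hAs : σ.1.sum = n + σ.2.sum := by
    have : (σ.1.sum : ℤ) = (n : ℤ) + (σ.2.sum : ℤ) := by linarith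
    exact_mod_cast this
  constructor
  · exact ⟨fun x hx => (hA x hx).1.pos, by omega⟩
  · exact ⟨fun x hx => (hT x hx).pos, by omega⟩

lemma lg_shift {x y c : ℕ} (hc : c % 2 = 0) : LGCond (x + c) (y + c) ↔ LGCond x y := by
  rw [LGCond_iff, LGCond_iff]
  omega

lemma pairwise_map_add {s : Multiset ℕ} {c : ℕ} (hc : c % 2 = 0) :
    (s.map (fun x => x + c)).Pairwise LGCond ↔ s.Pairwise LGCond := by
  rw [pairwise_map_iff lg_symm]
  constructor
  · exact pairwise_mem_imp (fun a _ b _ h => (lg_shift hc).mp h)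
  · exact pairwise_mem_imp (fun a _ b _ h => (lg_shift hc).mpr h)

lemma map_sub_add {s : Multiset ℕ} {c : ℕ} (h : ∀ x ∈ s, c ≤ x) :
    (s.map (fun x => x - c)).map (fun x => x + c) = s := by
  rw [Multiset.map_map]
  have : ∀ x ∈ s, ((fun x => x + c) ∘ (fun x => x - c)) x = id x := by
    intro x hx; simp only [Function.comp, id]; have := h x hx; omega
  rw [Multiset.map_congr rfl this, Multiset.map_id]

lemma pieceA_L (k m : ℕ) :
    LSet k (m + 2 * k) ∩ {π | 2 ∉ π ∧ 3 ∉ π} = (Multiset.map (fun x => x + 2)) '' LSet k m := by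
  ext π
  constructor
  · rintro ⟨⟨h2, hp, hs, hc⟩, hn2, hn3⟩
    have h4 : ∀ x ∈ π, 4 ≤ x := by
      intro x hx
      have := h2 x hx
      have hx2 : x ≠ 2 := fun h => hn2 (h ▸ hx)
      have hx3 : x ≠ 3 := fun h => hn3 (h ▸ hx)
      omega
    have heq : (π.map (fun x => x - 2)).map (fun x => x + 2) = π :=
      map_sub_add (fun x hx => by have := h4 x hx; omega)
    refine ⟨π.map (fun x => x - 2), ⟨?_, ?_, ?_, ?_⟩, heq⟩
    · intro y hy
      obtain ⟨x, hx, rfl⟩ := Multiset.mem_map.mp hy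
      have := h4 x hx; omega
    · rw [← pairwise_map_add (c := 2) rfl, heq]; exact hp
    · have := sum_map_add_const (π.map (fun x => x - 2)) 2
      rw [heq] at this
      rw [Multiset.card_map, hc] at this
      omega
    · rw [Multiset.card_map, hc]
  · rintro ⟨π', ⟨h2, hp, hs, hc⟩, rfl⟩
    refine ⟨⟨?_, ?_, ?_, ?_⟩, ?_, ?_⟩
    · intro y hy
      obtain ⟨x, hx, rfl⟩ := Multiset.mem_map.mp hy
      have := h2 x hx; omega
    · exact (pairwise_map_add (c := 2) rfl).mpr hp
    · rw [sum_map_add_const, hs, hc]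
    · rw [Multiset.card_map, hc]
    · intro hmem
      obtain ⟨x, hx, hx2⟩ := Multiset.mem_map.mp hmem
      have := h2 x hx; omega
    · intro hmem
      obtain ⟨x, hx, hx2⟩ := Multiset.mem_map.mp hmem
      have := h2 x hx; omega

lemma pieceB_L (k m : ℕ) :
    LSet (k + 1) (m + 2 * (k + 1)) ∩ {π | 2 ∈ π}
      = (fun π => 2 ::ₘ Multiset.map (fun x => x + 2) π) '' LSet k m := by
  ext π
  constructor
  · rintro ⟨⟨h2, hp, hs, hc⟩, hm2⟩
    have hπ : π = 2 ::ₘ π.erase 2 := (Multiset.cons_erase hm2).symm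
    rw [hπ, pairwise_cons_iff lg_symm] at hp
    obtain ⟨hrel, hp0⟩ := hp
    have h4 : ∀ x ∈ π.erase 2, 4 ≤ x := by
      intro x hx
      have hge := h2 x (Multiset.mem_of_mem_erase hx)
      have := (LGCond_iff 2 x).mp (hrel x hx)
      omega
    have heq : ((π.erase 2).map (fun x => x - 2)).map (fun x => x + 2) = π.erase 2 :=
      map_sub_add (fun x hx => by have := h4 x hx; omega)
    have hcard : Multiset.card (π.erase 2) = k := by
      rw [Multiset.card_erase_of_mem hm2, hc]; rfl
    have hsum : π.sum = 2 + (π.erase 2).sum := by conv_lhs => rw [hπ, Multiset.sum_cons]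
    refine ⟨(π.erase 2).map (fun x => x - 2), ⟨?_, ?_, ?_, ?_⟩, ?_⟩
    · intro y hy
      obtain ⟨x, hx, rfl⟩ := Multiset.mem_map.mp hy
      have := h4 x hx; omega
    · rw [← pairwise_map_add (c := 2) rfl, heq]; exact hp0
    · have := sum_map_add_const ((π.erase 2).map (fun x => x - 2)) 2
      rw [heq] at this
      rw [Multiset.card_map, hcard] at this
      omega
    · rw [Multiset.card_map, hcard]
    · simp only []
      rw [heq]
      exact hπ.symm
  · rintro ⟨π', ⟨h2, hp, hs, hc⟩, rfl⟩
    have hmem4 : ∀ y ∈ π'.map (fun x => x + 2), 4 ≤ y := by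
      intro y hy
      obtain ⟨x, hx, rfl⟩ := Multiset.mem_map.mp hy
      have := h2 x hx; omega
    refine ⟨⟨?_, ?_, ?_, ?_⟩, ?_⟩
    · intro y hy
      rcases Multiset.mem_cons.mp hy with h | h
      · omega
      · have := hmem4 y h; omega
    · rw [pairwise_cons_iff lg_symm]
      refine ⟨fun b hb => ?_, (pairwise_map_add (c := 2) rfl).mpr hp⟩
      rw [LGCond_iff]
      have := hmem4 b hb
      omega
    · rw [Multiset.sum_cons, sum_map_add_const, hs, hc]
      ring
    · rw [Multiset.card_cons, Multiset.card_map, hc]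
    · exact Multiset.mem_cons_self 2 _

lemma pieceC_L (k m : ℕ) :
    LSet (k + 1) (m + (4 * k + 3)) ∩ {π | 3 ∈ π}
      = (fun π => 3 ::ₘ Multiset.map (fun x => x + 4) π) '' LSet k m := by
  ext π
  constructor
  · rintro ⟨⟨h2, hp, hs, hc⟩, hm3⟩
    have hπ : π = 3 ::ₘ π.erase 3 := (Multiset.cons_erase hm3).symm
    rw [hπ, pairwise_cons_iff lg_symm] at hp
    obtain ⟨hrel, hp0⟩ := hp
    have h6 : ∀ x ∈ π.erase 3, 6 ≤ x := by
      intro x hx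
      have hge := h2 x (Multiset.mem_of_mem_erase hx)
      have := (LGCond_iff 3 x).mp (hrel x hx)
      omega
    have heq : ((π.erase 3).map (fun x => x - 4)).map (fun x => x + 4) = π.erase 3 :=
      map_sub_add (fun x hx => by have := h6 x hx; omega)
    have hcard : Multiset.card (π.erase 3) = k := by
      rw [Multiset.card_erase_of_mem hm3, hc]; rfl
    have hsum : π.sum = 3 + (π.erase 3).sum := by conv_lhs => rw [hπ, Multiset.sum_cons]
    refine ⟨(π.erase 3).map (fun x => x - 4), ⟨?_, ?_, ?_, ?_⟩, ?_⟩
    · intro y hy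
      obtain ⟨x, hx, rfl⟩ := Multiset.mem_map.mp hy
      have := h6 x hx; omega
    · rw [← pairwise_map_add (c := 4) rfl, heq]; exact hp0
    · have := sum_map_add_const ((π.erase 3).map (fun x => x - 4)) 4
      rw [heq] at this
      rw [Multiset.card_map, hcard] at this
      omega
    · rw [Multiset.card_map, hcard]
    · simp only []
      rw [heq]
      exact hπ.symm
  · rintro ⟨π', ⟨h2, hp, hs, hc⟩, rfl⟩
    have hmem6 : ∀ y ∈ π'.map (fun x => x + 4), 6 ≤ y := by
      intro y hy
      obtain ⟨x, hx, rfl⟩ := Multiset.mem_map.mp hy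
      have := h2 x hx; omega
    refine ⟨⟨?_, ?_, ?_, ?_⟩, ?_⟩
    · intro y hy
      rcases Multiset.mem_cons.mp hy with h | h
      · omega
      · have := hmem6 y h; omega
    · rw [pairwise_cons_iff lg_symm]
      refine ⟨fun b hb => ?_, (pairwise_map_add (c := 4) rfl).mpr hp⟩
      rw [LGCond_iff]
      have := hmem6 b hb
      omega
    · rw [Multiset.sum_cons, sum_map_add_const, hs, hc]
      ring
    · rw [Multiset.card_cons, Multiset.card_map, hc]
    · exact Multiset.mem_cons_self 3 _

lemma pieceC_L_empty (k n : ℕ) (hn : n < 4 * k + 3) :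
    LSet (k + 1) n ∩ {π | 3 ∈ π} = ∅ := by
  rw [Set.eq_empty_iff_forall_notMem]
  rintro π ⟨⟨h2, hp, hs, hc⟩, hm3⟩
  have hπ : π = 3 ::ₘ π.erase 3 := (Multiset.cons_erase hm3).symm
  rw [hπ, pairwise_cons_iff lg_symm] at hp
  obtain ⟨hrel, -⟩ := hp
  have h6 : ∀ x ∈ π.erase 3, 6 ≤ x := by
    intro x hx
    have hge := h2 x (Multiset.mem_of_mem_erase hx)
    have := (LGCond_iff 3 x).mp (hrel x hx)
    omega
  have hcard : Multiset.card (π.erase 3) = k := by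
    rw [Multiset.card_erase_of_mem hm3, hc]; rfl
  have h1 := Multiset.card_nsmul_le_sum h6
  rw [hcard, smul_eq_mul] at h1
  have hsum : π.sum = 3 + (π.erase 3).sum := by conv_lhs => rw [hπ, Multiset.sum_cons]
  omega

end MyAux

namespace MyAux
open Multiset

lemma pieceA_R (k m : ℕ) :
    RSet (k + 1) (m + 2 * (k + 1)) ∩ {σ | 2 * k + 3 ∉ σ.1}
      = (fun σ : Multiset ℕ × Multiset ℕ => (σ.1.map (fun x => x + 2), σ.2)) '' RSet (k + 1) m := by
  ext σ
  constructor
  · rintro ⟨⟨hc, hA, hT, hnd, hTle, hsum⟩, hn⟩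
    have h5 : ∀ x ∈ σ.1, 2 * k + 5 ≤ x := by
      intro x hx
      obtain ⟨ho, hl⟩ := hA x hx
      rw [Nat.odd_iff] at ho
      have : x ≠ 2 * k + 3 := fun h => hn (h ▸ hx)
      omega
    have heq : (σ.1.map (fun x => x - 2)).map (fun x => x + 2) = σ.1 :=
      map_sub_add (fun x hx => by have := h5 x hx; omega)
    have hmap : (σ.1.map (fun x => x - 2)).sum + 2 * (k + 1) = σ.1.sum := by
      have := sum_map_add_const (σ.1.map (fun x => x - 2)) 2
      rw [heq, Multiset.card_map, hc] at this
      omega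
    refine ⟨(σ.1.map (fun x => x - 2), σ.2), ⟨?_, ?_, hT, hnd, hTle, ?_⟩, ?_⟩
    · rw [Multiset.card_map, hc]
    · intro y hy
      obtain ⟨x, hx, rfl⟩ := Multiset.mem_map.mp hy
      obtain ⟨ho, -⟩ := hA x hx
      rw [Nat.odd_iff] at ho
      have := h5 x hx
      exact ⟨by rw [Nat.odd_iff]; omega, by omega⟩
    · dsimp only
      omega
    · dsimp only
      rw [heq]
  · rintro ⟨σ', ⟨hc, hA, hT, hnd, hTle, hsum⟩, rfl⟩
    have hA2 : ∀ y ∈ σ'.1.map (fun x => x + 2), Odd y ∧ 2 * k + 5 ≤ y := by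
      intro y hy
      obtain ⟨x, hx, rfl⟩ := Multiset.mem_map.mp hy
      obtain ⟨ho, hl⟩ := hA x hx
      rw [Nat.odd_iff] at ho
      exact ⟨by rw [Nat.odd_iff]; omega, by omega⟩
    have hmap : (σ'.1.map (fun x => x + 2)).sum = σ'.1.sum + 2 * (k + 1) := by
      rw [sum_map_add_const, hc]
    refine ⟨⟨?_, ?_, hT, hnd, ?_, ?_⟩, ?_⟩
    · rw [Multiset.card_map, hc]
    · intro y hy
      obtain ⟨ho, hl⟩ := hA2 y hy
      exact ⟨ho, by omega⟩
    · intro x hx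
      have := hTle x hx; omega
    · dsimp only
      rw [hmap]
      push_cast at hsum ⊢
      omega
    · intro hmem
      obtain ⟨ho, hl⟩ := hA2 _ hmem
      rw [Nat.odd_iff] at ho
      omega

lemma pieceB_R (k m : ℕ) :
    RSet (k + 1) (m + 2 * (k + 1)) ∩ {σ | 2 * k + 3 ∈ σ.1 ∧ 2 * k + 1 ∈ σ.2}
      = (fun σ : Multiset ℕ × Multiset ℕ =>
          ((2 * k + 3) ::ₘ σ.1.map (fun x => x + 2), (2 * k + 1) ::ₘ σ.2)) '' RSet k m := by
  ext σ
  constructor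
  · rintro ⟨⟨hc, hA, hT, hnd, hTle, hsum⟩, hmA, hmT⟩
    set A0 := σ.1.erase (2 * k + 3) with hA0
    set T0 := σ.2.erase (2 * k + 1) with hT0
    have hσ1 : σ.1 = (2 * k + 3) ::ₘ A0 := (Multiset.cons_erase hmA).symm
    have hσ2 : σ.2 = (2 * k + 1) ::ₘ T0 := (Multiset.cons_erase hmT).symm
    have hA0mem : ∀ x ∈ A0, x ∈ σ.1 := fun x hx => Multiset.mem_of_mem_erase hx
    have hA0ge : ∀ x ∈ A0, 2 * k + 3 ≤ x := by
      intro x hx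
      obtain ⟨ho, hl⟩ := hA x (hA0mem x hx)
      rw [Nat.odd_iff] at ho
      omega
    have heq : (A0.map (fun x => x - 2)).map (fun x => x + 2) = A0 :=
      map_sub_add (fun x hx => by have := hA0ge x hx; omega)
    have hcA : Multiset.card A0 = k := by
      rw [hA0, Multiset.card_erase_of_mem hmA, hc]; rfl
    have hsA : σ.1.sum = 2 * k + 3 + A0.sum := by
      conv_lhs => rw [hσ1, Multiset.sum_cons]
    have hsT : σ.2.sum = 2 * k + 1 + T0.sum := by
      conv_lhs => rw [hσ2, Multiset.sum_cons]
    have hndT0 : T0.Nodup := hnd.erase _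
    have hT0mem : ∀ x ∈ T0, x ∈ σ.2 := fun x hx => Multiset.mem_of_mem_erase hx
    have hT0le : ∀ x ∈ T0, x ≤ 2 * k := by
      intro x hx
      have hne : x ≠ 2 * k + 1 := (hnd.mem_erase_iff.mp hx).1
      have ho := Nat.odd_iff.mp (hT x (hT0mem x hx))
      have := hTle x (hT0mem x hx)
      omega
    have hmap : (A0.map (fun x => x - 2)).sum + 2 * k = A0.sum := by
      have := sum_map_add_const (A0.map (fun x => x - 2)) 2
      rw [heq, Multiset.card_map, hcA] at this
      omega
    refine ⟨(A0.map (fun x => x - 2), T0), ⟨?_, ?_, ?_, hndT0, hT0le, ?_⟩, ?_⟩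
    · rw [Multiset.card_map, hcA]
    · intro y hy
      obtain ⟨x, hx, rfl⟩ := Multiset.mem_map.mp hy
      obtain ⟨ho, -⟩ := hA x (hA0mem x hx)
      have := hA0ge x hx
      rw [Nat.odd_iff] at ho
      exact ⟨by rw [Nat.odd_iff]; omega, by omega⟩
    · exact fun x hx => hT x (hT0mem x hx)
    · dsimp only
      omega
    · dsimp only
      rw [heq, ← hσ1, ← hσ2]
  · rintro ⟨σ', ⟨hc, hA, hT, hnd, hTle, hsum⟩, rfl⟩
    have hA2 : ∀ y ∈ σ'.1.map (fun x => x + 2), Odd y ∧ 2 * k + 3 ≤ y := by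
      intro y hy
      obtain ⟨x, hx, rfl⟩ := Multiset.mem_map.mp hy
      obtain ⟨ho, hl⟩ := hA x hx
      rw [Nat.odd_iff] at ho
      exact ⟨by rw [Nat.odd_iff]; omega, by omega⟩
    have hmap : (σ'.1.map (fun x => x + 2)).sum = σ'.1.sum + 2 * k := by
      rw [sum_map_add_const, hc]
    refine ⟨⟨?_, ?_, ?_, ?_, ?_, ?_⟩, ?_, ?_⟩
    · rw [Multiset.card_cons, Multiset.card_map, hc]
    · intro y hy
      rcases Multiset.mem_cons.mp hy with h | h
      · subst h
        exact ⟨⟨k + 1, by ring⟩, by omega⟩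
      · obtain ⟨ho, hl⟩ := hA2 y h
        exact ⟨ho, by omega⟩
    · intro x hx
      rcases Multiset.mem_cons.mp hx with h | h
      · subst h; exact ⟨k, by ring⟩
      · exact hT x h
    · rw [Multiset.nodup_cons]
      exact ⟨fun hmem => by have := hTle _ hmem; omega, hnd⟩
    · intro x hx
      rcases Multiset.mem_cons.mp hx with h | h
      · omega
      · have := hTle x h; omega
    · dsimp only
      rw [Multiset.sum_cons, Multiset.sum_cons, hmap]
      push_cast at hsum ⊢
      omega
    · exact Multiset.mem_cons_self _ _
    · exact Multiset.mem_cons_self _ _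

lemma pieceC_R (k m : ℕ) :
    RSet (k + 1) (m + (4 * k + 3)) ∩ {σ | 2 * k + 3 ∈ σ.1 ∧ 2 * k + 1 ∉ σ.2}
      = (fun σ : Multiset ℕ × Multiset ℕ =>
          ((2 * k + 3) ::ₘ σ.1.map (fun x => x + 2), σ.2)) '' RSet k m := by
  ext σ
  constructor
  · rintro ⟨⟨hc, hA, hT, hnd, hTle, hsum⟩, hmA, hmT⟩
    set A0 := σ.1.erase (2 * k + 3) with hA0
    have hσ1 : σ.1 = (2 * k + 3) ::ₘ A0 := (Multiset.cons_erase hmA).symm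
    have hA0mem : ∀ x ∈ A0, x ∈ σ.1 := fun x hx => Multiset.mem_of_mem_erase hx
    have hA0ge : ∀ x ∈ A0, 2 * k + 3 ≤ x := by
      intro x hx
      obtain ⟨ho, hl⟩ := hA x (hA0mem x hx)
      rw [Nat.odd_iff] at ho
      omega
    have heq : (A0.map (fun x => x - 2)).map (fun x => x + 2) = A0 :=
      map_sub_add (fun x hx => by have := hA0ge x hx; omega)
    have hcA : Multiset.card A0 = k := by
      rw [hA0, Multiset.card_erase_of_mem hmA, hc]; rfl
    have hsA : σ.1.sum = 2 * k + 3 + A0.sum := by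
      conv_lhs => rw [hσ1, Multiset.sum_cons]
    have hT0le : ∀ x ∈ σ.2, x ≤ 2 * k := by
      intro x hx
      have hne : x ≠ 2 * k + 1 := fun h => hmT (h ▸ hx)
      have ho := Nat.odd_iff.mp (hT x hx)
      have := hTle x hx
      omega
    have hmap : (A0.map (fun x => x - 2)).sum + 2 * k = A0.sum := by
      have := sum_map_add_const (A0.map (fun x => x - 2)) 2
      rw [heq, Multiset.card_map, hcA] at this
      omega
    refine ⟨(A0.map (fun x => x - 2), σ.2), ⟨?_, ?_, hT, hnd, hT0le, ?_⟩, ?_⟩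
    · rw [Multiset.card_map, hcA]
    · intro y hy
      obtain ⟨x, hx, rfl⟩ := Multiset.mem_map.mp hy
      obtain ⟨ho, -⟩ := hA x (hA0mem x hx)
      have := hA0ge x hx
      rw [Nat.odd_iff] at ho
      exact ⟨by rw [Nat.odd_iff]; omega, by omega⟩
    · dsimp only
      omega
    · dsimp only
      rw [heq, ← hσ1]
  · rintro ⟨σ', ⟨hc, hA, hT, hnd, hTle, hsum⟩, rfl⟩
    have hA2 : ∀ y ∈ σ'.1.map (fun x => x + 2), Odd y ∧ 2 * k + 3 ≤ y := by
      intro y hy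
      obtain ⟨x, hx, rfl⟩ := Multiset.mem_map.mp hy
      obtain ⟨ho, hl⟩ := hA x hx
      rw [Nat.odd_iff] at ho
      exact ⟨by rw [Nat.odd_iff]; omega, by omega⟩
    have hmap : (σ'.1.map (fun x => x + 2)).sum = σ'.1.sum + 2 * k := by
      rw [sum_map_add_const, hc]
    refine ⟨⟨?_, ?_, hT, hnd, ?_, ?_⟩, ?_, ?_⟩
    · rw [Multiset.card_cons, Multiset.card_map, hc]
    · intro y hy
      rcases Multiset.mem_cons.mp hy with h | h
      · subst h
        exact ⟨⟨k + 1, by ring⟩, by omega⟩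
      · obtain ⟨ho, hl⟩ := hA2 y h
        exact ⟨ho, by omega⟩
    · intro x hx
      have := hTle x hx; omega
    · dsimp only
      rw [Multiset.sum_cons, hmap]
      push_cast at hsum ⊢
      omega
    · exact Multiset.mem_cons_self _ _
    · intro hmem
      have := hTle _ hmem; omega
lemma pieceC_R_empty (k n : ℕ) (hn : n < 4 * k + 3) :
    RSet (k + 1) n ∩ {σ | 2 * k + 3 ∈ σ.1 ∧ 2 * k + 1 ∉ σ.2} = ∅ := by
  rw [Set.eq_empty_iff_forall_notMem]
  rintro σ ⟨⟨hc, hA, hT, hnd, hTle, hsum⟩, hmA, hmT⟩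
  have hT0le : ∀ x ∈ σ.2, x % 2 = 1 ∧ x ≤ 2 * k := by
    intro x hx
    have hne : x ≠ 2 * k + 1 := fun h => hmT (h ▸ hx)
    have ho := Nat.odd_iff.mp (hT x hx)
    have := hTle x hx
    exact ⟨ho, by omega⟩
  have hTs : σ.2.sum ≤ k * k := sum_le_of_nodup_odd_le σ.2 hnd k hT0le
  have hAge : ∀ x ∈ σ.1, 2 * k + 3 ≤ x := by
    intro x hx
    obtain ⟨ho, hl⟩ := hA x hx
    rw [Nat.odd_iff] at ho
    omega
  have h1 := Multiset.card_nsmul_le_sum hAge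
  rw [hc, smul_eq_mul] at h1
  have hAs : (k + 1) * (2 * k + 3) = 2 * (k * k) + 5 * k + 3 := by ring
  have hsum' : (σ.1.sum : ℤ) = (n : ℤ) + (σ.2.sum : ℤ) := by linarith
  have hsum'' : σ.1.sum = n + σ.2.sum := by exact_mod_cast hsum'
  omega

end MyAux

namespace MyAux
open Multiset

lemma L_split (k n : ℕ) :
    (LSet (k + 1) n).ncard =
      (LSet (k + 1) n ∩ {π | 2 ∉ π ∧ 3 ∉ π}).ncard + (LSet (k + 1) n ∩ {π | 2 ∈ π}).ncard
        + (LSet (k + 1) n ∩ {π | 3 ∈ π}).ncard := by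
  classical
  have hfin := LSet_finite (k + 1) n
  have hcover : LSet (k + 1) n =
      (LSet (k + 1) n ∩ {π | 2 ∉ π ∧ 3 ∉ π}) ∪
        ((LSet (k + 1) n ∩ {π | 2 ∈ π}) ∪ (LSet (k + 1) n ∩ {π | 3 ∈ π})) := by
    ext π
    constructor
    · intro h
      by_cases h2 : 2 ∈ π
      · exact Or.inr (Or.inl ⟨h, h2⟩)
      by_cases h3 : 3 ∈ π
      · exact Or.inr (Or.inr ⟨h, h3⟩)
      · exact Or.inl ⟨h, h2, h3⟩
    · rintro (⟨h, -⟩ | ⟨h, -⟩ | ⟨h, -⟩) <;> exact h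
  have hd23 : Disjoint (LSet (k + 1) n ∩ {π | 2 ∈ π}) (LSet (k + 1) n ∩ {π | 3 ∈ π}) := by
    rw [Set.disjoint_left]
    rintro π ⟨⟨-, hp, -, -⟩, h2⟩ ⟨-, h3⟩
    have := pairwise_of_mem lg_symm hp h2 h3 (by omega)
    rw [LGCond_iff] at this
    omega
  have hd1 : Disjoint (LSet (k + 1) n ∩ {π | 2 ∉ π ∧ 3 ∉ π})
      ((LSet (k + 1) n ∩ {π | 2 ∈ π}) ∪ (LSet (k + 1) n ∩ {π | 3 ∈ π})) := by
    rw [Set.disjoint_left]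
    rintro π ⟨-, hn2, hn3⟩ (⟨-, h2⟩ | ⟨-, h3⟩)
    exacts [hn2 h2, hn3 h3]
  conv_lhs => rw [hcover]
  rw [Set.ncard_union_eq hd1 (hfin.subset Set.inter_subset_left)
      ((hfin.subset Set.inter_subset_left).union (hfin.subset Set.inter_subset_left)),
    Set.ncard_union_eq hd23 (hfin.subset Set.inter_subset_left)
      (hfin.subset Set.inter_subset_left), add_assoc]

lemma R_split (k n : ℕ) :
    (RSet (k + 1) n).ncard =
      (RSet (k + 1) n ∩ {σ | 2 * k + 3 ∉ σ.1}).ncard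
        + (RSet (k + 1) n ∩ {σ | 2 * k + 3 ∈ σ.1 ∧ 2 * k + 1 ∈ σ.2}).ncard
        + (RSet (k + 1) n ∩ {σ | 2 * k + 3 ∈ σ.1 ∧ 2 * k + 1 ∉ σ.2}).ncard := by
  classical
  have hfin := RSet_finite (k + 1) n
  have hcover : RSet (k + 1) n =
      (RSet (k + 1) n ∩ {σ | 2 * k + 3 ∉ σ.1}) ∪
        ((RSet (k + 1) n ∩ {σ | 2 * k + 3 ∈ σ.1 ∧ 2 * k + 1 ∈ σ.2}) ∪
          (RSet (k + 1) n ∩ {σ | 2 * k + 3 ∈ σ.1 ∧ 2 * k + 1 ∉ σ.2})) := by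
    ext σ
    constructor
    · intro h
      by_cases h1 : 2 * k + 3 ∈ σ.1
      · by_cases h2 : 2 * k + 1 ∈ σ.2
        · exact Or.inr (Or.inl ⟨h, h1, h2⟩)
        · exact Or.inr (Or.inr ⟨h, h1, h2⟩)
      · exact Or.inl ⟨h, h1⟩
    · rintro (⟨h, -⟩ | ⟨h, -⟩ | ⟨h, -⟩) <;> exact h
  have hd23 : Disjoint (RSet (k + 1) n ∩ {σ | 2 * k + 3 ∈ σ.1 ∧ 2 * k + 1 ∈ σ.2})
      (RSet (k + 1) n ∩ {σ | 2 * k + 3 ∈ σ.1 ∧ 2 * k + 1 ∉ σ.2}) := by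
    rw [Set.disjoint_left]
    rintro σ ⟨-, -, h2⟩ ⟨-, -, h2'⟩
    exact h2' h2
  have hd1 : Disjoint (RSet (k + 1) n ∩ {σ | 2 * k + 3 ∉ σ.1})
      ((RSet (k + 1) n ∩ {σ | 2 * k + 3 ∈ σ.1 ∧ 2 * k + 1 ∈ σ.2}) ∪
        (RSet (k + 1) n ∩ {σ | 2 * k + 3 ∈ σ.1 ∧ 2 * k + 1 ∉ σ.2})) := by
    rw [Set.disjoint_left]
    rintro σ ⟨-, h1⟩ (⟨-, h1', -⟩ | ⟨-, h1', -⟩) <;> exact h1 h1'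
  conv_lhs => rw [hcover]
  rw [Set.ncard_union_eq hd1 (hfin.subset Set.inter_subset_left)
      ((hfin.subset Set.inter_subset_left).union (hfin.subset Set.inter_subset_left)),
    Set.ncard_union_eq hd23 (hfin.subset Set.inter_subset_left)
      (hfin.subset Set.inter_subset_left), add_assoc]

lemma pairwise_zero {α : Type*} (r : α → α → Prop) : Multiset.Pairwise r 0 :=
  ⟨[], rfl, List.Pairwise.nil⟩

lemma LSet_zero (n : ℕ) : LSet 0 n = if n = 0 then {(0 : Multiset ℕ)} else ∅ := by
  ext π
  split_ifs with h
  · subst h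
    constructor
    · rintro ⟨-, -, -, hc⟩
      exact Multiset.card_eq_zero.mp hc
    · rintro rfl
      exact ⟨fun x hx => absurd hx (Multiset.notMem_zero x), pairwise_zero _, rfl, rfl⟩
  · constructor
    · rintro ⟨-, -, hs, hc⟩
      have : π = 0 := Multiset.card_eq_zero.mp hc
      subst this
      simp at hs
      exact absurd hs.symm h
    · rintro ⟨⟩

lemma RSet_zero (n : ℕ) :
    RSet 0 n = if n = 0 then {((0 : Multiset ℕ), (0 : Multiset ℕ))} else ∅ := by
  ext σ
  constructor
  · rintro ⟨hc, -, hT, -, hTle, hsum⟩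
    have h1 : σ.1 = 0 := Multiset.card_eq_zero.mp hc
    have h2 : σ.2 = 0 := by
      rw [Multiset.eq_zero_iff_forall_notMem]
      intro x hx
      have := Nat.odd_iff.mp (hT x hx)
      have := hTle x hx
      omega
    rw [h1, h2] at hsum
    simp at hsum
    have : n = 0 := by exact_mod_cast hsum.symm
    subst this
    simp only [if_pos rfl, Set.mem_singleton_iff]
    exact Prod.ext h1 h2
  · intro hmem
    split_ifs at hmem with h
    · subst h
      rw [Set.mem_singleton_iff] at hmem
      subst hmem
      refine ⟨rfl, ?_, ?_, Multiset.nodup_zero, ?_, by simp⟩ <;>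
        exact fun x hx => absurd hx (Multiset.notMem_zero x)
    · exact absurd hmem (Set.notMem_empty σ)

end MyAux

namespace MyAux
open Multiset

lemma inj_map2 : Function.Injective (Multiset.map (fun x : ℕ => x + 2)) :=
  Multiset.map_injective (fun a b h => by omega)

lemma inj_map4 : Function.Injective (Multiset.map (fun x : ℕ => x + 4)) :=
  Multiset.map_injective (fun a b h => by omega)

lemma inj_cons_map (a c : ℕ) :
    Function.Injective (fun π : Multiset ℕ => a ::ₘ Multiset.map (fun x => x + c) π) := by
  intro s t h
  simp only at h
  exact Multiset.map_injective (fun x y hxy => by omega) ((Multiset.cons_inj_right a).mp h)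

lemma inj_pair_map2 :
    Function.Injective (fun σ : Multiset ℕ × Multiset ℕ => (σ.1.map (fun x => x + 2), σ.2)) := by
  rintro ⟨a1, a2⟩ ⟨b1, b2⟩ h
  simp only [Prod.mk.injEq] at h
  exact Prod.ext (inj_map2 h.1) h.2

lemma inj_pair_cons (a b : ℕ) :
    Function.Injective (fun σ : Multiset ℕ × Multiset ℕ =>
      (a ::ₘ σ.1.map (fun x => x + 2), b ::ₘ σ.2)) := by
  rintro ⟨a1, a2⟩ ⟨b1, b2⟩ h
  simp only [Prod.mk.injEq] at h
  exact Prod.ext (inj_map2 ((Multiset.cons_inj_right a).mp h.1))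
    ((Multiset.cons_inj_right b).mp h.2)

lemma inj_pair_cons' (a : ℕ) :
    Function.Injective (fun σ : Multiset ℕ × Multiset ℕ =>
      (a ::ₘ σ.1.map (fun x => x + 2), σ.2)) := by
  rintro ⟨a1, a2⟩ ⟨b1, b2⟩ h
  simp only [Prod.mk.injEq] at h
  exact Prod.ext (inj_map2 ((Multiset.cons_inj_right a).mp h.1)) h.2

lemma key (n : ℕ) : ∀ k, (LSet k n).ncard = (RSet k n).ncard := by
  induction n using Nat.strong_induction_on with
  | _ n IH =>
    intro k
    cases k with
    | zero =>
      rw [LSet_zero, RSet_zero]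
      split_ifs
      · rw [Set.ncard_singleton, Set.ncard_singleton]
      · rw [Set.ncard_empty, Set.ncard_empty]
    | succ k =>
      by_cases hn : n < 2 * (k + 1)
      · have hL : LSet (k + 1) n = ∅ := by
          rw [Set.eq_empty_iff_forall_notMem]
          intro π h
          have := LSet_sum_lb h
          omega
        have hR : RSet (k + 1) n = ∅ := by
          rw [Set.eq_empty_iff_forall_notMem]
          intro σ h
          have := RSet_sum_lb h
          have h1 : 1 * (k + 1) ≤ (k + 1) * (k + 1) := Nat.mul_le_mul_right _ (by omega)
          omega
        rw [hL, hR, Set.ncard_empty, Set.ncard_empty]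
      · push_neg at hn
        obtain ⟨m, rfl⟩ := Nat.exists_eq_add_of_le hn
        have hc : 2 * (k + 1) + m = m + 2 * (k + 1) := by ring
        rw [hc, L_split, R_split]
        have e1 : (LSet (k + 1) (m + 2 * (k + 1)) ∩ {π | 2 ∉ π ∧ 3 ∉ π}).ncard
            = (RSet (k + 1) (m + 2 * (k + 1)) ∩ {σ | 2 * k + 3 ∉ σ.1}).ncard := by
          rw [pieceA_L, pieceA_R, Set.ncard_image_of_injective _ inj_map2,
            Set.ncard_image_of_injective _ inj_pair_map2]
          exact IH m (by omega) (k + 1)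
        have e2 : (LSet (k + 1) (m + 2 * (k + 1)) ∩ {π | 2 ∈ π}).ncard
            = (RSet (k + 1) (m + 2 * (k + 1)) ∩ {σ | 2 * k + 3 ∈ σ.1 ∧ 2 * k + 1 ∈ σ.2}).ncard := by
          rw [pieceB_L, pieceB_R, Set.ncard_image_of_injective _ (inj_cons_map 2 2),
            Set.ncard_image_of_injective _ (inj_pair_cons (2 * k + 3) (2 * k + 1))]
          exact IH m (by omega) k
        have e3 : (LSet (k + 1) (m + 2 * (k + 1)) ∩ {π | 3 ∈ π}).ncard
            = (RSet (k + 1) (m + 2 * (k + 1)) ∩ {σ | 2 * k + 3 ∈ σ.1 ∧ 2 * k + 1 ∉ σ.2}).ncard := by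
          by_cases hm : m + 2 * (k + 1) < 4 * k + 3
          · rw [pieceC_L_empty _ _ hm, pieceC_R_empty _ _ hm, Set.ncard_empty, Set.ncard_empty]
          · obtain ⟨m₂, hm₂⟩ : ∃ m₂, m + 2 * (k + 1) = m₂ + (4 * k + 3) :=
              ⟨m + 2 * (k + 1) - (4 * k + 3), by omega⟩
            rw [hm₂, pieceC_L, pieceC_R, Set.ncard_image_of_injective _ (inj_cons_map 3 4),
              Set.ncard_image_of_injective _ (inj_pair_cons' (2 * k + 3))]
            exact IH m₂ (by omega) k
        rw [e1, e2, e3]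

lemma ncard_fiberwise {α : Type*} {s : Set α} (hs : s.Finite) (f : α → ℕ) (N : ℕ)
    (hb : ∀ a ∈ s, f a ≤ N) :
    s.ncard = ∑ j ∈ Finset.range (N + 1), (s ∩ f ⁻¹' {j}).ncard := by
  classical
  have hmain : hs.toFinset.card
      = ∑ j ∈ Finset.range (N + 1), (hs.toFinset.filter (fun a => f a = j)).card :=
    Finset.card_eq_sum_card_fiberwise
      (fun x hx => Finset.mem_range.mpr (Nat.lt_succ_of_le (hb x (hs.mem_toFinset.mp hx))))
  calc s.ncard = hs.toFinset.card := by rw [← Set.ncard_coe_finset, hs.coe_toFinset]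
    _ = ∑ j ∈ Finset.range (N + 1), (hs.toFinset.filter (fun a => f a = j)).card := hmain
    _ = ∑ j ∈ Finset.range (N + 1), (s ∩ f ⁻¹' {j}).ncard := by
        refine Finset.sum_congr rfl fun j _ => ?_
        rw [← Set.ncard_coe_finset]
        congr 1
        ext a
        simp only [Finset.coe_filter, Set.mem_setOf_eq, hs.mem_toFinset, Set.mem_inter_iff,
          Set.mem_preimage, Set.mem_singleton_iff]

end MyAux


open MyAux in
/-- Theorem 14, first equality: LG₂(n) = LG₋₂(n). -/
theorem little_gollnitz_second_signed (n : ℕ) :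
    {π : Multiset ℕ | IsPartitionOf n π ∧ (∀ x ∈ π, 2 ≤ x) ∧
      Multiset.Pairwise LGCond π}.ncard =
    {σ : Multiset ℕ × Multiset ℕ | IsSignedPartitionOf n σ.1 σ.2 ∧
      (∀ x ∈ σ.1, Odd x ∧ 2 * Multiset.card σ.1 ≤ x) ∧
      (∀ x ∈ σ.2, Odd x) ∧ σ.2.Nodup ∧
      (∀ x ∈ σ.2, x ≤ 2 * Multiset.card σ.1)}.ncard := by
  classical
  have hS1fin : {π : Multiset ℕ | IsPartitionOf n π ∧ (∀ x ∈ π, 2 ≤ x) ∧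
      Multiset.Pairwise LGCond π}.Finite := by
    apply (finite_parts n).subset
    rintro π ⟨⟨hpos, hsum⟩, -, -⟩
    exact ⟨hpos, hsum⟩
  have hmemR : ∀ σ : Multiset ℕ × Multiset ℕ,
      σ ∈ {σ : Multiset ℕ × Multiset ℕ | IsSignedPartitionOf n σ.1 σ.2 ∧
        (∀ x ∈ σ.1, Odd x ∧ 2 * Multiset.card σ.1 ≤ x) ∧
        (∀ x ∈ σ.2, Odd x) ∧ σ.2.Nodup ∧
        (∀ x ∈ σ.2, x ≤ 2 * Multiset.card σ.1)} ↔ σ ∈ RSet (Multiset.card σ.1) n := by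
    intro σ
    constructor
    · rintro ⟨⟨-, -, hsum⟩, hA, hT, hnd, hTle⟩
      exact ⟨rfl, hA, hT, hnd, hTle, hsum⟩
    · rintro ⟨-, hA, hT, hnd, hTle, hsum⟩
      refine ⟨⟨?_, ?_, hsum⟩, hA, hT, hnd, hTle⟩
      · intro x hx
        have := (hA x hx).1
        rw [Nat.odd_iff] at this
        omega
      · intro x hx
        have := hT x hx
        rw [Nat.odd_iff] at this
        omega
  have hS2fin : {σ : Multiset ℕ × Multiset ℕ | IsSignedPartitionOf n σ.1 σ.2 ∧
      (∀ x ∈ σ.1, Odd x ∧ 2 * Multiset.card σ.1 ≤ x) ∧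
      (∀ x ∈ σ.2, Odd x) ∧ σ.2.Nodup ∧
      (∀ x ∈ σ.2, x ≤ 2 * Multiset.card σ.1)}.Finite := by
    apply ((finite_parts_le (2 * n)).prod (finite_parts_le n)).subset
    intro σ hσ
    have hmem := (hmemR σ).mp hσ
    have hbound := RSet_sum_lb hmem
    obtain ⟨-, hA, hT, hnd, hTle, hsum⟩ := hmem
    have hTs := sum_le_of_nodup_odd_le σ.2 hnd (Multiset.card σ.1)
      (fun x hx => ⟨Nat.odd_iff.mp (hT x hx), hTle x hx⟩)
    have hAs : σ.1.sum = n + σ.2.sum := by omega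
    have hT2 : σ.2.sum ≤ n := by linarith
    constructor
    · refine ⟨fun x hx => ?_, by omega⟩
      have := (hA x hx).1
      rw [Nat.odd_iff] at this
      omega
    · refine ⟨fun x hx => ?_, hT2⟩
      have := hT x hx
      rw [Nat.odd_iff] at this
      omega
  have hfibL : ∀ π ∈ {π : Multiset ℕ | IsPartitionOf n π ∧ (∀ x ∈ π, 2 ≤ x) ∧
      Multiset.Pairwise LGCond π}, Multiset.card π ≤ n := by
    rintro π ⟨⟨hpos, hsum⟩, h2, -⟩
    have := Multiset.card_nsmul_le_sum h2
    rw [smul_eq_mul] at this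
    omega
  have hfibR : ∀ σ ∈ {σ : Multiset ℕ × Multiset ℕ | IsSignedPartitionOf n σ.1 σ.2 ∧
      (∀ x ∈ σ.1, Odd x ∧ 2 * Multiset.card σ.1 ≤ x) ∧
      (∀ x ∈ σ.2, Odd x) ∧ σ.2.Nodup ∧
      (∀ x ∈ σ.2, x ≤ 2 * Multiset.card σ.1)}, Multiset.card σ.1 ≤ n := by
    intro σ hσ
    have := RSet_sum_lb ((hmemR σ).mp hσ)
    have h2 := Nat.le_add_left (Multiset.card σ.1)
      (Multiset.card σ.1 * Multiset.card σ.1)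
    linarith
  rw [ncard_fiberwise hS1fin Multiset.card n hfibL,
      ncard_fiberwise hS2fin (fun σ => Multiset.card σ.1) n hfibR]
  refine Finset.sum_congr rfl fun j _ => ?_
  have hL : {π : Multiset ℕ | IsPartitionOf n π ∧ (∀ x ∈ π, 2 ≤ x) ∧
      Multiset.Pairwise LGCond π} ∩ Multiset.card ⁻¹' {j} = LSet j n := by
    ext π
    simp only [Set.mem_inter_iff, Set.mem_preimage, Set.mem_singleton_iff, Set.mem_setOf_eq]
    constructor
    · rintro ⟨⟨⟨hpos, hsum⟩, h2, hp⟩, hcard⟩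
      exact ⟨h2, hp, hsum, hcard⟩
    · rintro ⟨h2, hp, hsum, hcard⟩
      exact ⟨⟨⟨fun x hx => by have := h2 x hx; omega, hsum⟩, h2, hp⟩, hcard⟩
  have hR : {σ : Multiset ℕ × Multiset ℕ | IsSignedPartitionOf n σ.1 σ.2 ∧
      (∀ x ∈ σ.1, Odd x ∧ 2 * Multiset.card σ.1 ≤ x) ∧
      (∀ x ∈ σ.2, Odd x) ∧ σ.2.Nodup ∧
      (∀ x ∈ σ.2, x ≤ 2 * Multiset.card σ.1)} ∩
        (fun σ => Multiset.card σ.1) ⁻¹' {j} = RSet j n := by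
    ext σ
    simp only [Set.mem_inter_iff, Set.mem_preimage, Set.mem_singleton_iff]
    constructor
    · rintro ⟨hσ, hcard⟩
      have hm := (hmemR σ).mp hσ
      rwa [hcard] at hm
    · intro hσ
      have hcard : Multiset.card σ.1 = j := hσ.1
      refine ⟨(hmemR σ).mpr ?_, hcard⟩
      rwa [hcard]
  rw [hL, hR]
  exact key n j
end
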